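/- arXiv:1108.1972 — 5 statements merged into one kernel-verified Lean document; each statement's English description precedes it below -/
import Mathlib

section
/- Let X = (X₁,…,X_d) be a random vector whose joint distribution function F is a MEV distribution with unit Fréchet marginals, and let I₁, I₂ be disjoint non-empty subsets of {1,…,d}. Then for all x, y > 0 the limit Λ_U^{(I₁|I₂)}(x,y) = lim_{t→∞} P( M(I₁) > 1 − x/t | M(I₂) > 1 − y/t ) exists and equals 1 + (x ε_{I₁})/(y ε_{I₂}) − l^{(I₁,I₂)}(x^{-1}, y^{-1})/(y ε_{I₂}). -/
open MeasureTheory Filter Finset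

/-- The joint distribution function of the random vector `X` under `μ`. -/
noncomputable def jointCDF {Ω : Type*} [MeasurableSpace Ω] (μ : Measure Ω) {d : ℕ}
    (X : Fin d → Ω → ℝ) (x : Fin d → ℝ) : ℝ :=
  (μ {ω | ∀ i, X i ω ≤ x i}).toReal

/-- The marginal distribution function of the `i`-th coordinate of `X` under `μ`. -/
noncomputable def margCDF {Ω : Type*} [MeasurableSpace Ω] (μ : Measure Ω) {d : ℕ}
    (X : Fin d → Ω → ℝ) (i : Fin d) (u : ℝ) : ℝ :=
  (μ {ω | X i ω ≤ u}).toReal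

/-- `l^{(I₁,I₂)}(x,y) = -log F(a₁,…,a_d)` where `aᵢ = x` on `I₁`, `aᵢ = y` on `I₂` and
`aᵢ = ∞` otherwise (taking the limit of `F` in those arguments, i.e. dropping the
corresponding constraints). -/
noncomputable def mevL {Ω : Type*} [MeasurableSpace Ω] (μ : Measure Ω) {d : ℕ}
    (X : Fin d → Ω → ℝ) (I₁ I₂ : Finset (Fin d)) (x y : ℝ) : ℝ :=
  -Real.log (μ {ω | (∀ i ∈ I₁, X i ω ≤ x) ∧ (∀ j ∈ I₂, X j ω ≤ y)}).toReal

/-- The extremal coefficient `ε_I = l^{(I,∅)}(1,1)` of the sub-vector `X_I`. -/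
noncomputable def extCoef {Ω : Type*} [MeasurableSpace Ω] (μ : Measure Ω) {d : ℕ}
    (X : Fin d → Ω → ℝ) (I : Finset (Fin d)) : ℝ :=
  mevL μ X I ∅ 1 1

/-- `M(I) = max_{i ∈ I} F_i(X_i)`. -/
noncomputable def Msub {Ω : Type*} [MeasurableSpace Ω] (μ : Measure Ω) {d : ℕ}
    (X : Fin d → Ω → ℝ) (I : Finset (Fin d)) (hI : I.Nonempty) (ω : Ω) : ℝ :=
  I.sup' hI fun i => margCDF μ X i (X i ω)

/-- The stable tail dependence function `l(x₁,…,x_d) = -log F(x₁,…,x_d)`. -/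
noncomputable def stdf {Ω : Type*} [MeasurableSpace Ω] (μ : Measure Ω) {d : ℕ}
    (X : Fin d → Ω → ℝ) (x : Fin d → ℝ) : ℝ :=
  -Real.log (jointCDF μ X x)

/-- `X` has a multivariate extreme value (max-stable) distribution with unit Fréchet
marginals under the probability measure `μ`. -/
structure IsMEVFrechet {Ω : Type*} [MeasurableSpace Ω] (μ : Measure Ω) {d : ℕ}
    (X : Fin d → Ω → ℝ) : Prop where
  meas : ∀ i, Measurable (X i)
  frechet : ∀ i, ∀ u : ℝ, 0 < u → margCDF μ X i u = Real.exp (-u⁻¹)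
  maxStable : ∀ t : ℝ, 0 < t → ∀ x : Fin d → ℝ, (∀ i, 0 < x i) →
    jointCDF μ X (fun i => t * x i) ^ t = jointCDF μ X x

/-!
Write `G(a, b)` for `F` evaluated at `a` on `I₁`, at `b` on `I₂` and at `∞` elsewhere.
Max-stability passes to `G` by letting the free coordinates tend to `∞`, so
`G(ta, tb) ^ t = G(a, b)`; as `G(ra, rb) → 1` when `r → ∞`, this forces `G > 0`. Hence
`ℓ(a, b) = -log G(a⁻¹, b⁻¹)` is finite, monotone and positively homogeneous of degree one, and
therefore continuous on `(0, ∞)²`.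

Almost surely every `Xᵢ > 0`, and then `M(I) ≤ 1 - x/t` exactly when `Xᵢ ≤ αₜ⁻¹` on `I`, where
`αₜ = -log (1 - x/t) ~ x/t`. By inclusion–exclusion the numerator is
`(1 - e^{-ℓ_{I₁}(αₜ)}) + (1 - e^{-ℓ_{I₂}(βₜ)}) - (1 - e^{-ℓ(αₜ, βₜ)})`, and `1 - e^{-w} ~ w`
together with `t ℓ(αₜ, βₜ) = ℓ(tαₜ, tβₜ) → ℓ(x, y)` gives the limits `x ε_{I₁} + y ε_{I₂} - ℓ(x, y)`
and `y ε_{I₂}` of `t` times the numerator and the denominator.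
-/

open Topology

section RealAsymptotics

theorem tendsto_mul_comp_of_hasDerivAt {f : ℝ → ℝ} {f' c : ℝ} (hf : HasDerivAt f f' 0)
    (hf0 : f 0 = 0) {w : ℝ → ℝ} (hw : Tendsto (fun t => t * w t) atTop (𝓝 c)) :
    Tendsto (fun t => t * f (w t)) atTop (𝓝 (c * f')) := by
  have hw0 : Tendsto w atTop (𝓝 0) := by
    have h := hw.mul tendsto_inv_atTop_zero
    rw [mul_zero] at h
    refine h.congr' ?_
    filter_upwards [eventually_ne_atTop 0] with t ht
    field_simp
  have hslope : Tendsto (fun t => dslope f 0 (w t)) atTop (𝓝 f') := by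
    have h := (continuousAt_dslope_same.2 hf.differentiableAt).tendsto.comp hw0
    rwa [dslope_same, hf.deriv] at h
  refine (hw.mul hslope).congr fun t => ?_
  have h := sub_smul_dslope f 0 (w t)
  rw [sub_zero, hf0, sub_zero, smul_eq_mul] at h
  rw [mul_assoc, h]

theorem tendsto_mul_neg_log_one_sub_div (x : ℝ) :
    Tendsto (fun t : ℝ => t * -Real.log (1 - x / t)) atTop (𝓝 x) := by
  have hf : HasDerivAt (fun s : ℝ => -Real.log (1 - s)) 1 0 := by
    simpa using ((hasDerivAt_id' (x := (0 : ℝ))).const_sub 1 |>.log (by norm_num)).fun_neg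
  have hw : Tendsto (fun t : ℝ => t * (x / t)) atTop (𝓝 x) := by
    refine tendsto_const_nhds.congr' ?_
    filter_upwards [eventually_ne_atTop 0] with t ht
    field_simp
  simpa using tendsto_mul_comp_of_hasDerivAt hf (by simp) hw

theorem tendsto_mul_one_sub_exp_neg {w : ℝ → ℝ} {c : ℝ}
    (hw : Tendsto (fun t => t * w t) atTop (𝓝 c)) :
    Tendsto (fun t => t * (1 - Real.exp (-w t))) atTop (𝓝 c) := by
  have hf : HasDerivAt (fun s : ℝ => 1 - Real.exp (-s)) 1 0 := by
    simpa using ((hasDerivAt_id (0 : ℝ)).neg.exp).const_sub 1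
  simpa using tendsto_mul_comp_of_hasDerivAt hf (by simp) hw

/- `f (u, v)` lies between `s f (x, y)` and `S f (x, y)`, where `s` and `S` are the smallest and
the largest of the ratios `u / x` and `v / y`. -/
theorem tendsto_apply_of_monotone_of_homogeneous {f : ℝ → ℝ → ℝ} {x y : ℝ} (hx : 0 < x)
    (hy : 0 < y) (hmono : ∀ ⦃a b a' b'⦄, 0 < a → 0 < b → a ≤ a' → b ≤ b' → f a b ≤ f a' b')
    (hhom : ∀ ⦃s⦄, 0 < s → f (s * x) (s * y) = s * f x y) {α : Type*} {l : Filter α}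
    {u v : α → ℝ} (hu : Tendsto u l (𝓝 x)) (hv : Tendsto v l (𝓝 y)) :
    Tendsto (fun t => f (u t) (v t)) l (𝓝 (f x y)) := by
  have hux : Tendsto (fun t => u t / x) l (𝓝 1) := by
    simpa [hx.ne'] using hu.div_const x
  have hvy : Tendsto (fun t => v t / y) l (𝓝 1) := by
    simpa [hy.ne'] using hv.div_const y
  have hlow := hux.min hvy
  have hupp := hux.max hvy
  rw [min_self] at hlow
  rw [max_self] at hupp
  refine tendsto_of_tendsto_of_tendsto_of_le_of_le' (by simpa using hlow.mul_const (f x y))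
    (by simpa using hupp.mul_const (f x y)) ?_ ?_
  all_goals filter_upwards [hlow.eventually (lt_mem_nhds one_pos)] with t hs
  all_goals
    have hxu := (le_div_iff₀ hx).1 (min_le_left (u t / x) (v t / y))
    have hyv := (le_div_iff₀ hy).1 (min_le_right (u t / x) (v t / y))
  · rw [← hhom hs]
    exact hmono (mul_pos hs hx) (mul_pos hs hy) hxu hyv
  · rw [← hhom (hs.trans_le min_le_max)]
    exact hmono ((mul_pos hs hx).trans_le hxu) ((mul_pos hs hy).trans_le hyv)
      ((div_le_iff₀ hx).1 (le_max_left _ _)) ((div_le_iff₀ hy).1 (le_max_right _ _))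

theorem eventually_one_sub_div_mem_Ioo {z : ℝ} (hz : 0 < z) :
    ∀ᶠ t in atTop, 1 - z / t ∈ Set.Ioo 0 1 := by
  filter_upwards [eventually_gt_atTop z] with t hzt
  have ht := hz.trans hzt
  exact ⟨by rw [sub_pos, div_lt_one ht]; exact hzt, by linarith [div_pos hz ht]⟩

theorem exp_neg_inv_le_iff {z u : ℝ} (hz : 0 < z) (hu : u ∈ Set.Ioo 0 1) :
    Real.exp (-z⁻¹) ≤ u ↔ z ≤ (-Real.log u)⁻¹ := by
  rw [← Real.le_log_iff_exp_le hu.1, neg_le,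
    le_inv_comm₀ hz (by linarith [Real.log_neg hu.1 hu.2])]

end RealAsymptotics

section Measure

variable {Ω : Type*} [MeasurableSpace Ω] {μ : Measure Ω}

theorem tendsto_measureReal_iUnion_atTop [IsFiniteMeasure μ] {ι : Type*} [Preorder ι]
    [IsCountablyGenerated (atTop : Filter ι)] {s : ι → Set Ω} (hs : Monotone s) :
    Tendsto (fun r => μ.real (s r)) atTop (𝓝 (μ.real (⋃ r, s r))) :=
  (ENNReal.tendsto_toReal (measure_ne_top μ _)).comp (tendsto_measure_iUnion_atTop hs)

theorem probReal_compl_inter_compl [IsProbabilityMeasure μ] {A B : Set Ω}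
    (hA : MeasurableSet A) (hB : MeasurableSet B) :
    μ.real (Aᶜ ∩ Bᶜ) = (1 - μ.real A) + (1 - μ.real B) - (1 - μ.real (A ∩ B)) := by
  rw [← Set.compl_union, probReal_compl_eq_one_sub (hA.union hB)]
  linarith [measureReal_union_add_inter (μ := μ) (s := A) hB]

end Measure

section BlockCDF

variable {Ω : Type*} {d : ℕ} {X : Fin d → Ω → ℝ}

def lowerEvent (X : Fin d → Ω → ℝ) (J : Finset (Fin d)) (a : ℝ) : Set Ω :=
  {ω | ∀ i ∈ J, X i ω ≤ a}

@[simp]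
theorem lowerEvent_empty (a : ℝ) : lowerEvent X ∅ a = Set.univ := by
  simp [lowerEvent]

theorem lowerEvent_mono (J : Finset (Fin d)) {a b : ℝ} (hab : a ≤ b) :
    lowerEvent X J a ⊆ lowerEvent X J b :=
  fun _ hω i hi => (hω i hi).trans hab

def blockPoint (J₁ J₂ : Finset (Fin d)) (a b r : ℝ) : Fin d → ℝ :=
  fun i => if i ∈ J₁ then a else if i ∈ J₂ then b else r

theorem blockPoint_mul (J₁ J₂ : Finset (Fin d)) (a b r t : ℝ) :
    blockPoint J₁ J₂ (t * a) (t * b) (t * r) = fun i => t * blockPoint J₁ J₂ a b r i := by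
  funext i
  simp only [blockPoint]
  split_ifs <;> rfl

theorem blockPoint_pos (J₁ J₂ : Finset (Fin d)) {a b r : ℝ} (ha : 0 < a) (hb : 0 < b)
    (hr : 0 < r) (i : Fin d) : 0 < blockPoint J₁ J₂ a b r i := by
  simp only [blockPoint]
  split_ifs <;> assumption

variable [MeasurableSpace Ω] {μ : Measure Ω}

/-- `F` evaluated at `a` on `J₁`, at `b` on `J₂` and at `∞` elsewhere. -/
noncomputable def blockCDF (μ : Measure Ω) (X : Fin d → Ω → ℝ) (J₁ J₂ : Finset (Fin d))
    (a b : ℝ) : ℝ :=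
  μ.real (lowerEvent X J₁ a ∩ lowerEvent X J₂ b)

theorem mevL_eq_neg_log_blockCDF (J₁ J₂ : Finset (Fin d)) (a b : ℝ) :
    mevL μ X J₁ J₂ a b = -Real.log (blockCDF μ X J₁ J₂ a b) := rfl

theorem measurableSet_lowerEvent (hX : ∀ i, Measurable (X i)) (J : Finset (Fin d)) (a : ℝ) :
    MeasurableSet (lowerEvent X J a) := by
  simp only [lowerEvent, Set.ofPred_forall]
  exact J.measurableSet_biInter fun i _ => measurableSet_le (hX i) measurable_const

theorem blockCDF_nonneg (J₁ J₂ : Finset (Fin d)) (a b : ℝ) : 0 ≤ blockCDF μ X J₁ J₂ a b :=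
  measureReal_nonneg

theorem blockCDF_mono [IsFiniteMeasure μ] (J₁ J₂ : Finset (Fin d)) {a b a' b' : ℝ}
    (ha : a ≤ a') (hb : b ≤ b') : blockCDF μ X J₁ J₂ a b ≤ blockCDF μ X J₁ J₂ a' b' :=
  measureReal_mono (Set.inter_subset_inter (lowerEvent_mono J₁ ha) (lowerEvent_mono J₂ hb))

theorem tendsto_jointCDF_blockPoint [IsFiniteMeasure μ] {J₁ J₂ : Finset (Fin d)}
    (hd : Disjoint J₁ J₂) (a b : ℝ) :
    Tendsto (fun r => jointCDF μ X (blockPoint J₁ J₂ a b r)) atTop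
      (𝓝 (blockCDF μ X J₁ J₂ a b)) := by
  have hmono : Monotone fun r => {ω | ∀ i, X i ω ≤ blockPoint J₁ J₂ a b r i} := by
    intro r r' hr ω hω i
    refine (hω i).trans ?_
    simp only [blockPoint]
    split_ifs <;> simp [hr]
  have hunion : (⋃ r, {ω | ∀ i, X i ω ≤ blockPoint J₁ J₂ a b r i}) =
      lowerEvent X J₁ a ∩ lowerEvent X J₂ b := by
    ext ω
    simp only [blockPoint, lowerEvent, Set.mem_inter_iff, Set.mem_ofPred_eq, Set.mem_iUnion]
    constructor
    · rintro ⟨r, hr⟩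
      refine ⟨fun i hi => by simpa [hi] using hr i, fun i hi => ?_⟩
      simpa [hi, Finset.disjoint_right.1 hd hi] using hr i
    · rintro ⟨h₁, h₂⟩
      obtain ⟨r, hr⟩ := (eventually_all.2 fun i => eventually_ge_atTop (X i ω)).exists
      refine ⟨r, fun i => ?_⟩
      split_ifs with hi₁ hi₂
      exacts [h₁ i hi₁, h₂ i hi₂, hr i]
  rw [blockCDF, ← hunion]
  exact tendsto_measureReal_iUnion_atTop hmono

theorem tendsto_blockCDF_mul_atTop [IsProbabilityMeasure μ] (J₁ J₂ : Finset (Fin d))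
    {a b : ℝ} (ha : 0 < a) (hb : 0 < b) :
    Tendsto (fun r => blockCDF μ X J₁ J₂ (r * a) (r * b)) atTop (𝓝 1) := by
  have hmono : Monotone fun r : ℝ => lowerEvent X J₁ (r * a) ∩ lowerEvent X J₂ (r * b) :=
    fun r r' hr => Set.inter_subset_inter (lowerEvent_mono J₁ (by gcongr))
      (lowerEvent_mono J₂ (by gcongr))
  have hunion : (⋃ r : ℝ, lowerEvent X J₁ (r * a) ∩ lowerEvent X J₂ (r * b)) = Set.univ := by
    refine Set.eq_univ_of_forall fun ω => ?_
    obtain ⟨r, hr⟩ := (eventually_all.2 fun i =>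
        ((tendsto_id.atTop_mul_const ha).eventually_ge_atTop (X i ω)).and
          ((tendsto_id.atTop_mul_const hb).eventually_ge_atTop (X i ω))).exists
    exact Set.mem_iUnion.2 ⟨r, fun i _ => (hr i).1, fun i _ => (hr i).2⟩
  simpa only [blockCDF, hunion, probReal_univ] using tendsto_measureReal_iUnion_atTop (μ := μ) hmono

end BlockCDF

namespace IsMEVFrechet

variable {Ω : Type*} [MeasurableSpace Ω] {μ : Measure Ω} {d : ℕ} {X : Fin d → Ω → ℝ}

theorem blockCDF_mul_rpow [IsFiniteMeasure μ] (hX : IsMEVFrechet μ X) {J₁ J₂ : Finset (Fin d)}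
    (hd : Disjoint J₁ J₂) {a b t : ℝ} (ha : 0 < a) (hb : 0 < b) (ht : 0 < t) :
    blockCDF μ X J₁ J₂ (t * a) (t * b) ^ t = blockCDF μ X J₁ J₂ a b := by
  have hscaled := (Real.continuousAt_rpow_const _ t (Or.inr ht.le)).tendsto.comp
    ((tendsto_jointCDF_blockPoint (μ := μ) (X := X) hd (t * a) (t * b)).comp
      (tendsto_id.const_mul_atTop ht))
  refine tendsto_nhds_unique (hscaled.congr' ?_) (tendsto_jointCDF_blockPoint hd a b)
  filter_upwards [eventually_gt_atTop 0] with r hr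
  change jointCDF μ X (blockPoint J₁ J₂ (t * a) (t * b) (t * r)) ^ t = _
  rw [blockPoint_mul, hX.maxStable t ht _ (blockPoint_pos J₁ J₂ ha hb hr)]

theorem ae_pos [IsFiniteMeasure μ] (hX : IsMEVFrechet μ X) (i : Fin d) :
    ∀ᵐ ω ∂μ, 0 < X i ω := by
  have hbound : ∀ ε > 0, μ.real {ω | X i ω ≤ 0} ≤ Real.exp (-ε⁻¹) := fun ε hε =>
    (hX.frechet i ε hε).symm ▸ measureReal_mono fun ω (hω : X i ω ≤ 0) => hω.trans hε.le
  have hlim : Tendsto (fun ε : ℝ => Real.exp (-ε⁻¹)) (𝓝[>] 0) (𝓝 0) :=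
    Real.tendsto_exp_atBot.comp (tendsto_neg_atTop_atBot.comp tendsto_inv_nhdsGT_zero)
  have hzero : μ.real {ω | X i ω ≤ 0} = 0 :=
    (ge_of_tendsto hlim (eventually_nhdsWithin_of_forall hbound)).antisymm measureReal_nonneg
  rw [ae_iff]
  simpa [measureReal_eq_zero_iff] using hzero

theorem lt_Msub_ae_eq [IsFiniteMeasure μ] (hX : IsMEVFrechet μ X) {I : Finset (Fin d)}
    (hI : I.Nonempty) {u : ℝ} (hu : u ∈ Set.Ioo 0 1) :
    {ω | u < Msub μ X I hI ω} =ᵐ[μ] (lowerEvent X I (-Real.log u)⁻¹)ᶜ := by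
  filter_upwards [ae_all_iff.2 hX.ae_pos] with ω hω
  change (u < Msub μ X I hI ω) = ¬ ∀ i ∈ I, X i ω ≤ (-Real.log u)⁻¹
  rw [← not_le, Msub, Finset.sup'_le_iff]
  refine propext (not_congr (forall₂_congr fun i _ => ?_))
  rw [hX.frechet i _ (hω i), exp_neg_inv_le_iff (hω i) hu]

variable [IsProbabilityMeasure μ]

theorem blockCDF_pos (hX : IsMEVFrechet μ X) {J₁ J₂ : Finset (Fin d)} (hd : Disjoint J₁ J₂)
    {a b : ℝ} (ha : 0 < a) (hb : 0 < b) : 0 < blockCDF μ X J₁ J₂ a b := by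
  refine (blockCDF_nonneg J₁ J₂ a b).lt_of_ne' fun h => zero_ne_one' ℝ ?_
  refine tendsto_nhds_unique (tendsto_const_nhds.congr' ?_)
    (tendsto_blockCDF_mul_atTop (μ := μ) (X := X) J₁ J₂ ha hb)
  filter_upwards [eventually_gt_atTop 0] with r hr
  have hr0 := hX.blockCDF_mul_rpow hd ha hb hr
  rw [h, Real.rpow_eq_zero (blockCDF_nonneg _ _ _ _) hr.ne'] at hr0
  exact hr0.symm

theorem exp_neg_mevL (hX : IsMEVFrechet μ X) {J₁ J₂ : Finset (Fin d)} (hd : Disjoint J₁ J₂)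
    {a b : ℝ} (ha : 0 < a) (hb : 0 < b) :
    Real.exp (-mevL μ X J₁ J₂ a b) = blockCDF μ X J₁ J₂ a b := by
  rw [mevL_eq_neg_log_blockCDF, neg_neg, Real.exp_log (hX.blockCDF_pos hd ha hb)]

theorem mevL_inv_mul (hX : IsMEVFrechet μ X) {J₁ J₂ : Finset (Fin d)} (hd : Disjoint J₁ J₂)
    {a b s : ℝ} (ha : 0 < a) (hb : 0 < b) (hs : 0 < s) :
    mevL μ X J₁ J₂ (s * a)⁻¹ (s * b)⁻¹ = s * mevL μ X J₁ J₂ a⁻¹ b⁻¹ := by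
  have h := hX.blockCDF_mul_rpow hd (inv_pos.2 (mul_pos hs ha)) (inv_pos.2 (mul_pos hs hb)) hs
  rw [mul_inv, mul_inv, mul_inv_cancel_left₀ hs.ne', mul_inv_cancel_left₀ hs.ne'] at h
  rw [mul_inv, mul_inv, mevL_eq_neg_log_blockCDF, mevL_eq_neg_log_blockCDF, ← h,
    Real.log_rpow (hX.blockCDF_pos hd (inv_pos.2 ha) (inv_pos.2 hb))]
  ring

theorem mevL_inv_mono (hX : IsMEVFrechet μ X) {J₁ J₂ : Finset (Fin d)} (hd : Disjoint J₁ J₂)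
    {a b a' b' : ℝ} (ha : 0 < a) (hb : 0 < b) (haa' : a ≤ a') (hbb' : b ≤ b') :
    mevL μ X J₁ J₂ a⁻¹ b⁻¹ ≤ mevL μ X J₁ J₂ a'⁻¹ b'⁻¹ := by
  rw [mevL_eq_neg_log_blockCDF, mevL_eq_neg_log_blockCDF, neg_le_neg_iff]
  exact Real.log_le_log (hX.blockCDF_pos hd (inv_pos.2 (ha.trans_le haa'))
    (inv_pos.2 (hb.trans_le hbb'))) (blockCDF_mono J₁ J₂ (inv_anti₀ ha haa') (inv_anti₀ hb hbb'))

theorem mevL_inv_empty (hX : IsMEVFrechet μ X) (J : Finset (Fin d)) {x : ℝ} (hx : 0 < x) :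
    mevL μ X J ∅ x⁻¹ x⁻¹ = x * extCoef μ X J := by
  simpa [extCoef] using hX.mevL_inv_mul (disjoint_empty_right J) one_pos one_pos hx

theorem extCoef_pos (hX : IsMEVFrechet μ X) {J : Finset (Fin d)} (hJ : J.Nonempty) :
    0 < extCoef μ X J := by
  obtain ⟨i, hi⟩ := hJ
  have hle : blockCDF μ X J ∅ 1 1 ≤ margCDF μ X i 1 :=
    measureReal_mono fun ω hω => hω.1 i hi
  rw [hX.frechet i 1 one_pos] at hle
  have hlog := Real.log_le_log (hX.blockCDF_pos (disjoint_empty_right J) one_pos one_pos) hle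
  rw [Real.log_exp] at hlog
  rw [extCoef, mevL_eq_neg_log_blockCDF]
  linarith

theorem tendsto_mul_one_sub_blockCDF (hX : IsMEVFrechet μ X) {J₁ J₂ : Finset (Fin d)}
    (hd : Disjoint J₁ J₂) {x y : ℝ} (hx : 0 < x) (hy : 0 < y) :
    Tendsto (fun t => t * (1 - blockCDF μ X J₁ J₂ (-Real.log (1 - x / t))⁻¹
      (-Real.log (1 - y / t))⁻¹)) atTop (𝓝 (mevL μ X J₁ J₂ x⁻¹ y⁻¹)) := by
  have hα := tendsto_mul_neg_log_one_sub_div x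
  have hβ := tendsto_mul_neg_log_one_sub_div y
  have hpos : ∀ᶠ t : ℝ in atTop,
      0 < t ∧ 0 < -Real.log (1 - x / t) ∧ 0 < -Real.log (1 - y / t) := by
    filter_upwards [eventually_gt_atTop 0, hα.eventually (lt_mem_nhds hx),
      hβ.eventually (lt_mem_nhds hy)] with t ht hαt hβt
    exact ⟨ht, pos_of_mul_pos_right hαt ht.le, pos_of_mul_pos_right hβt ht.le⟩
  have hscaled := tendsto_apply_of_monotone_of_homogeneous hx hy
    (fun _ _ _ _ ha hb => hX.mevL_inv_mono hd ha hb) (fun _ hs => hX.mevL_inv_mul hd hx hy hs)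
    hα hβ
  refine (tendsto_mul_one_sub_exp_neg (w := fun t => mevL μ X J₁ J₂ (-Real.log (1 - x / t))⁻¹
    (-Real.log (1 - y / t))⁻¹) (hscaled.congr' ?_)).congr' ?_
  all_goals filter_upwards [hpos] with t ⟨ht, hαt, hβt⟩
  · exact hX.mevL_inv_mul hd hαt hβt ht
  · rw [hX.exp_neg_mevL hd (inv_pos.2 hαt) (inv_pos.2 hβt)]

theorem tendsto_mul_one_sub_probReal_lowerEvent (hX : IsMEVFrechet μ X) (J : Finset (Fin d))
    {x : ℝ} (hx : 0 < x) :
    Tendsto (fun t => t * (1 - μ.real (lowerEvent X J (-Real.log (1 - x / t))⁻¹))) atTop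
      (𝓝 (x * extCoef μ X J)) := by
  simpa only [blockCDF, lowerEvent_empty, Set.inter_univ, hX.mevL_inv_empty J hx] using
    hX.tendsto_mul_one_sub_blockCDF (disjoint_empty_right J) hx hx

end IsMEVFrechet

/-- For a MEV distribution with unit Fréchet marginals and disjoint
non-empty `I₁, I₂`, the limit defining `Λ_U^{(I₁|I₂)}(x,y)` exists and equals
`1 + xε_{I₁}/(yε_{I₂}) - l^{(I₁,I₂)}(x⁻¹,y⁻¹)/(yε_{I₂})`. -/
theorem statement0 {Ω : Type*} [MeasurableSpace Ω] (μ : Measure Ω) [IsProbabilityMeasure μ]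
    {d : ℕ} (X : Fin d → Ω → ℝ) (hX : IsMEVFrechet μ X)
    (I₁ I₂ : Finset (Fin d)) (h1 : I₁.Nonempty) (h2 : I₂.Nonempty) (hdisj : Disjoint I₁ I₂)
    (x y : ℝ) (hx : 0 < x) (hy : 0 < y) :
    Tendsto
      (fun t : ℝ =>
        (μ {ω | 1 - x / t < Msub μ X I₁ h1 ω ∧ 1 - y / t < Msub μ X I₂ h2 ω}).toReal /
          (μ {ω | 1 - y / t < Msub μ X I₂ h2 ω}).toReal)
      atTop
      (nhds (1 + x * extCoef μ X I₁ / (y * extCoef μ X I₂)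
        - mevL μ X I₁ I₂ x⁻¹ y⁻¹ / (y * extCoef μ X I₂))) := by
  set A := fun t : ℝ => lowerEvent X I₁ (-Real.log (1 - x / t))⁻¹
  set B := fun t : ℝ => lowerEvent X I₂ (-Real.log (1 - y / t))⁻¹
  have hA : Tendsto (fun t => t * (1 - μ.real (A t))) atTop (𝓝 (x * extCoef μ X I₁)) :=
    hX.tendsto_mul_one_sub_probReal_lowerEvent I₁ hx
  have hB : Tendsto (fun t => t * (1 - μ.real (B t))) atTop (𝓝 (y * extCoef μ X I₂)) :=
    hX.tendsto_mul_one_sub_probReal_lowerEvent I₂ hy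
  have hAB : Tendsto (fun t => t * (1 - μ.real (A t ∩ B t))) atTop
      (𝓝 (mevL μ X I₁ I₂ x⁻¹ y⁻¹)) :=
    hX.tendsto_mul_one_sub_blockCDF hdisj hx hy
  have hmeas := measurableSet_lowerEvent hX.meas
  have hnum := ((hA.add hB).sub hAB).congr fun t => by
    rw [← mul_add, ← mul_sub, ← probReal_compl_inter_compl (hmeas I₁ _) (hmeas I₂ _)]
  have hden := hB.congr fun t => by rw [← probReal_compl_eq_one_sub (hmeas I₂ _)]
  have hε₂ := hX.extCoef_pos h2
  convert (hnum.div hden (mul_pos hy hε₂).ne').congr' ?_ using 2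
  · field_simp
    ring
  filter_upwards [eventually_gt_atTop 0, eventually_one_sub_div_mem_Ioo hx,
    eventually_one_sub_div_mem_Ioo hy] with t ht hu hv
  rw [Pi.div_apply, mul_div_mul_left _ _ ht.ne', Set.ofPred_and, ← measureReal_def,
    ← measureReal_def, measureReal_congr ((hX.lt_Msub_ae_eq h1 hu).inter (hX.lt_Msub_ae_eq h2 hv)),
    measureReal_congr (hX.lt_Msub_ae_eq h2 hv)]
  rfl
end

section
/- Let X = (X₁,…,X_d) be a random vector whose joint distribution function F is a MEV distribution with unit Fréchet marginals, and let I₁, I₂ be disjoint non-empty subsets of {1,…,d}. Then 0 ≤ ε_{(I₁,I₂)} ≤ min( ε_{I₁}, ε_{I₂} ), where ε_{(I₁,I₂)} = ε_{I₁} + ε_{I₂} − ε_{I₁∪I₂}. -/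
open MeasureTheory Filter Finset

/-! Write `p_I(s) = P(X_i ≤ s for all i ∈ I)`, so that `ε_I = -log p_I(1)`. Letting the coordinates
outside `I` tend to `∞` in the max-stability relation gives `p_I(1/h) = p_I(1)^h` for `h > 0`.
The Bonferroni inequality `p_{I₁∪I₂} ≥ p_{I₁} + p_{I₂} - 1` at level `1/h` then reads
`a^h + b^h - 1 ≤ c^h` with `a = p_{I₁}(1)`, `b = p_{I₂}(1)`, `c = p_{I₁∪I₂}(1)`; subtracting `1`,
dividing by `h` and letting `h → 0⁺` yields `log a + log b ≤ log c`, i.e. `0 ≤ ε_{(I₁,I₂)}`.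
The upper bound is the monotonicity `ε_{I_k} ≤ ε_{I₁∪I₂}`. All the `p_I(1)` are positive because
`p_{1..d}(1) = p_{1..d}(t)^t` and `p_{1..d}(t) > 0` for some `t`, the events `{X ≤ t}` exhausting
`Ω`; so no logarithm hits the junk value `log 0 = 0`. -/

lemma Real.log_add_log_le_log_of_rpow {a b c : ℝ} (ha : 0 < a) (hb : 0 < b) (hc : 0 < c)
    (h : ∀ p : ℝ, 0 < p → a ^ p + b ^ p - 1 ≤ c ^ p) : Real.log a + Real.log b ≤ Real.log c := by
  refine le_of_tendsto_of_tendsto ((tendsto_rpow_sub_one_log ha).add (tendsto_rpow_sub_one_log hb))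
    (tendsto_rpow_sub_one_log hc) ?_
  filter_upwards [self_mem_nhdsWithin] with p (hp : 0 < p)
  rw [← mul_add]
  gcongr
  linarith [h p hp]

section DiagCDF

variable {Ω : Type*} [MeasurableSpace Ω] {μ : Measure Ω} {d : ℕ} {X : Fin d → Ω → ℝ}

/-- `p_I(s)`, the distribution function of `max_{i ∈ I} X_i`. -/
noncomputable def diagCDF (μ : Measure Ω) (X : Fin d → Ω → ℝ) (I : Finset (Fin d)) (s : ℝ) : ℝ :=
  μ.real {ω | ∀ i ∈ I, X i ω ≤ s}

lemma extCoef_eq_neg_log_diagCDF (I : Finset (Fin d)) :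
    extCoef μ X I = -Real.log (diagCDF μ X I 1) := by
  simp [extCoef, mevL, diagCDF, measureReal_def]

lemma diagCDF_anti [IsFiniteMeasure μ] {J K : Finset (Fin d)} (hJK : J ⊆ K) (s : ℝ) :
    diagCDF μ X K s ≤ diagCDF μ X J s :=
  measureReal_mono fun _ hω i hi => hω i (hJK hi)

lemma jointCDF_le_diagCDF [IsFiniteMeasure μ] (I : Finset (Fin d)) (s : ℝ) :
    jointCDF μ X (fun _ => s) ≤ diagCDF μ X I s :=
  measureReal_mono fun _ hω i _ => hω i

lemma diagCDF_add_diagCDF_sub_one_le [IsProbabilityMeasure μ] (hmeas : ∀ i, Measurable (X i))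
    (I₁ I₂ : Finset (Fin d)) (s : ℝ) :
    diagCDF μ X I₁ s + diagCDF μ X I₂ s - 1 ≤ diagCDF μ X (I₁ ∪ I₂) s := by
  have hB : MeasurableSet {ω | ∀ i ∈ I₂, X i ω ≤ s} := by
    simp only [Set.ofPred_forall]
    exact .biInter I₂.countable_toSet fun i _ => hmeas i measurableSet_Iic
  have hunion := measureReal_union_add_inter (s := {ω | ∀ i ∈ I₁, X i ω ≤ s}) hB (μ := μ)
  have hinter : {ω | ∀ i ∈ I₁ ∪ I₂, X i ω ≤ s}
      = {ω | ∀ i ∈ I₁, X i ω ≤ s} ∩ {ω | ∀ i ∈ I₂, X i ω ≤ s} := by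
    ext ω
    simp only [Set.mem_ofPred_eq, Set.mem_inter_iff, mem_union, or_imp, forall_and]
  rw [diagCDF, diagCDF, diagCDF, hinter]
  linarith [measureReal_le_one (μ := μ)
    (s := {ω | ∀ i ∈ I₁, X i ω ≤ s} ∪ {ω | ∀ i ∈ I₂, X i ω ≤ s})]

lemma tendsto_jointCDF_diagCDF [IsFiniteMeasure μ] (I : Finset (Fin d)) {c : ℝ} (hc : 0 < c) :
    Tendsto (fun n : ℕ => jointCDF μ X fun i => c * if i ∈ I then 1 else (n + 1 : ℝ)) atTop
      (nhds (diagCDF μ X I c)) := by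
  set S : ℕ → Set Ω := fun n => {ω | ∀ i, X i ω ≤ c * if i ∈ I then 1 else (n + 1 : ℝ)}
  have hS : Monotone S := by
    intro n m hnm ω hω i
    refine (hω i).trans (mul_le_mul_of_nonneg_left ?_ hc.le)
    split_ifs
    · rfl
    · exact_mod_cast Nat.succ_le_succ hnm
  have hunion : ⋃ n, S n = {ω | ∀ i ∈ I, X i ω ≤ c} := by
    ext ω
    simp only [S, Set.mem_iUnion, Set.mem_ofPred_eq]
    constructor
    · rintro ⟨n, hn⟩ i hi
      simpa [hi] using hn i
    · intro hω
      obtain ⟨M, hM⟩ := Finite.exists_le fun i => X i ω / c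
      obtain ⟨n, hn⟩ := exists_nat_ge M
      refine ⟨n, fun i => ?_⟩
      split_ifs with hi
      · simpa using hω i hi
      · rw [mul_comm, ← div_le_iff₀ hc]
        linarith [hM i]
  have := (ENNReal.tendsto_toReal (measure_ne_top μ _)).comp (tendsto_measure_iUnion_atTop hS)
  rwa [hunion] at this

namespace IsMEVFrechet

variable (hX : IsMEVFrechet μ X)
include hX

lemma diagCDF_rpow [IsFiniteMeasure μ] (I : Finset (Fin d)) {s : ℝ} (hs : 0 < s) :
    diagCDF μ X I s ^ s = diagCDF μ X I 1 := by
  set x : ℕ → Fin d → ℝ := fun n i => if i ∈ I then 1 else (n + 1 : ℝ)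
  have hx : ∀ n i, 0 < x n i := fun n i => by
    simp only [x]
    split_ifs <;> positivity
  have hlim : Tendsto (fun n => jointCDF μ X (x n)) atTop (nhds (diagCDF μ X I s ^ s)) :=
    ((tendsto_jointCDF_diagCDF I hs).rpow_const (Or.inr hs.le)).congr
      fun n => hX.maxStable s hs (x n) (hx n)
  refine tendsto_nhds_unique hlim ?_
  simpa only [one_mul] using tendsto_jointCDF_diagCDF (X := X) (μ := μ) I one_pos

lemma diagCDF_inv [IsFiniteMeasure μ] (I : Finset (Fin d)) {h : ℝ} (hh : 0 < h) :
    diagCDF μ X I h⁻¹ = diagCDF μ X I 1 ^ h := by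
  rw [← hX.diagCDF_rpow I (inv_pos.2 hh),
    ← Real.rpow_mul (x := diagCDF μ X I h⁻¹) measureReal_nonneg, inv_mul_cancel₀ hh.ne',
    Real.rpow_one]

lemma jointCDF_one_pos [IsProbabilityMeasure μ] : 0 < jointCDF μ X fun _ => 1 := by
  obtain ⟨n, hn⟩ : ∃ n : ℕ, μ {ω | ∀ i, X i ω ≤ n + 1} ≠ 0 := by
    by_contra! h
    have hcover : ⋃ n : ℕ, {ω | ∀ i, X i ω ≤ n + 1} = Set.univ := by
      refine Set.eq_univ_of_forall fun ω => ?_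
      obtain ⟨M, hM⟩ := Finite.exists_le fun i => X i ω
      obtain ⟨n, hn⟩ := exists_nat_ge M
      exact Set.mem_iUnion.2 ⟨n, fun i => by linarith [hM i]⟩
    simpa [hcover] using measure_iUnion_null h
  have hscale := hX.maxStable (n + 1) (by positivity) (fun _ => 1) fun _ => one_pos
  simp only [mul_one] at hscale
  rw [← hscale]
  exact Real.rpow_pos_of_pos (ENNReal.toReal_pos hn (measure_ne_top μ _)) _

lemma diagCDF_one_pos [IsProbabilityMeasure μ] (I : Finset (Fin d)) : 0 < diagCDF μ X I 1 :=
  hX.jointCDF_one_pos.trans_le (jointCDF_le_diagCDF I 1)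

lemma extCoef_mono [IsProbabilityMeasure μ] {J K : Finset (Fin d)} (hJK : J ⊆ K) :
    extCoef μ X J ≤ extCoef μ X K := by
  rw [extCoef_eq_neg_log_diagCDF, extCoef_eq_neg_log_diagCDF]
  exact neg_le_neg (Real.log_le_log (hX.diagCDF_one_pos K) (diagCDF_anti hJK 1))

lemma extCoef_union_le [IsProbabilityMeasure μ] (I₁ I₂ : Finset (Fin d)) :
    extCoef μ X (I₁ ∪ I₂) ≤ extCoef μ X I₁ + extCoef μ X I₂ := by
  simp only [extCoef_eq_neg_log_diagCDF]
  have hlog := Real.log_add_log_le_log_of_rpow (hX.diagCDF_one_pos I₁) (hX.diagCDF_one_pos I₂)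
    (hX.diagCDF_one_pos (I₁ ∪ I₂)) fun h hh => by
      simpa only [hX.diagCDF_inv _ hh] using
        diagCDF_add_diagCDF_sub_one_le (μ := μ) hX.meas I₁ I₂ h⁻¹
  linarith

end IsMEVFrechet

end DiagCDF

theorem statement5_general {Ω : Type*} [MeasurableSpace Ω] (μ : Measure Ω) [IsProbabilityMeasure μ]
    {d : ℕ} (X : Fin d → Ω → ℝ) (hX : IsMEVFrechet μ X)
    (I₁ I₂ : Finset (Fin d)) :
    0 ≤ extCoef μ X I₁ + extCoef μ X I₂ - extCoef μ X (I₁ ∪ I₂) ∧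
    extCoef μ X I₁ + extCoef μ X I₂ - extCoef μ X (I₁ ∪ I₂)
      ≤ min (extCoef μ X I₁) (extCoef μ X I₂) := by
  have hunion := hX.extCoef_union_le I₁ I₂
  have h₁ := hX.extCoef_mono (subset_union_left : I₁ ⊆ I₁ ∪ I₂)
  have h₂ := hX.extCoef_mono (subset_union_right : I₂ ⊆ I₁ ∪ I₂)
  exact ⟨by linarith, le_min (by linarith) (by linarith)⟩

/-- Bounds for the extremal coefficient of dependence:
`0 ≤ ε_{(I₁,I₂)} ≤ min(ε_{I₁}, ε_{I₂})`, where `ε_{(I₁,I₂)} = ε_{I₁} + ε_{I₂} - ε_{I₁∪I₂}`. -/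
theorem statement5 {Ω : Type*} [MeasurableSpace Ω] (μ : Measure Ω) [IsProbabilityMeasure μ]
    {d : ℕ} (X : Fin d → Ω → ℝ) (hX : IsMEVFrechet μ X)
    (I₁ I₂ : Finset (Fin d)) (h1 : I₁.Nonempty) (h2 : I₂.Nonempty) (hdisj : Disjoint I₁ I₂) :
    0 ≤ extCoef μ X I₁ + extCoef μ X I₂ - extCoef μ X (I₁ ∪ I₂) ∧
    extCoef μ X I₁ + extCoef μ X I₂ - extCoef μ X (I₁ ∪ I₂)
      ≤ min (extCoef μ X I₁) (extCoef μ X I₂) :=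
  statement5_general μ X hX I₁ I₂
end

section
/- Let X = (X₁,…,X_d) be a random vector whose joint distribution function F is a MEV distribution with unit Fréchet marginals, and let I₁, I₂ be disjoint non-empty subsets of {1,…,d}. Then for all (x,y), (x*,y*) ∈ [0,∞]² \ {(∞,∞)}, |Λ_U^{(I₁,I₂)}(x,y) − Λ_U^{(I₁,I₂)}(x*,y*)| ≤ |I₁|·|x − x*| + |I₂|·|y − y*|, where |I| denotes the cardinality of I. -/
open MeasureTheory Filter Finset

open ENNReal in
/-- The upper-tail dependence function `Λ_U^{(I₁,I₂)}` extended to `[0,∞]²` by the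
conventions `1/0 = ∞`, `1/∞ = 0`, so that `Λ_U(0,y) = Λ_U(x,0) = 0`,
`Λ_U(∞,y) = yε_{I₂}` and `Λ_U(x,∞) = xε_{I₁}`. -/
noncomputable def lambdaUExt {Ω : Type*} [MeasurableSpace Ω] (μ : Measure Ω) {d : ℕ}
    (X : Fin d → Ω → ℝ) (I₁ I₂ : Finset (Fin d)) (x y : ℝ≥0∞) : ℝ :=
  if x = 0 ∨ y = 0 then 0
  else if x = ∞ then y.toReal * extCoef μ X I₂
  else if y = ∞ then x.toReal * extCoef μ X I₁
  else x.toReal * extCoef μ X I₁ + y.toReal * extCoef μ X I₂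
    - mevL μ X I₁ I₂ x.toReal⁻¹ y.toReal⁻¹

open scoped ENNReal Topology

/-!
Write `ℓ(w) = -log F(1/w₁, …, 1/w_d)` for weights `w ≥ 0`, so that
`Λ_U(x, y) = x ε_{I₁} + y ε_{I₂} - ℓ(x 𝟙_{I₁} + y 𝟙_{I₂})`. Max-stability makes `ℓ` positively
homogeneous, and the unit Fréchet marginals give, by a union bound,
`F(1/v) - F(1/w) ≤ ∑ (wᵢ - vᵢ)` for `0 ≤ v ≤ w`. Near the origin `F ≈ 1`, so `log F` obeys the
same bound there, and homogeneity carries it to all weights: `0 ≤ ℓ(w) - ℓ(v) ≤ ∑ (wᵢ - vᵢ)`.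
In particular `0 ≤ ε_I ≤ |I|`, so moving `x` by `Δ` changes `Λ_U` by the difference of two
numbers in `[0, |I₁| Δ]`, and likewise for `y`. On the lines at infinity `Λ_U` is linear with
slope `ε_I ≤ |I|`, and a pair with exactly one infinite coordinate makes the bound infinite.
-/

lemma Real.exp_neg_sub_exp_neg_le {a b : ℝ} (ha : 0 ≤ a) (hab : a ≤ b) :
    Real.exp (-a) - Real.exp (-b) ≤ b - a := by
  have h₁ : Real.exp (-a) ≤ 1 := Real.exp_le_one_iff.2 (by linarith)
  have h₂ : a - b + 1 ≤ Real.exp (a - b) := Real.add_one_le_exp _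
  have h₃ : Real.exp (-b) = Real.exp (a - b) * Real.exp (-a) := by
    rw [← Real.exp_add]; ring_nf
  nlinarith [Real.exp_pos (-a)]

lemma Real.log_sub_log_le_div {x y : ℝ} (hx : 0 < x) (hy : 0 < y) :
    Real.log y - Real.log x ≤ (y - x) / x := by
  rw [← Real.log_div hy.ne' hx.ne', sub_div, div_self hx.ne']
  exact Real.log_le_sub_one_of_pos (div_pos hy hx)

lemma mul_le_one_of_le_of_mul_le_one {v w x : ℝ} (hv : 0 ≤ v) (hvw : v ≤ w)
    (h : w * x ≤ 1) : v * x ≤ 1 := by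
  rcases le_total 0 x with hx | hx <;> nlinarith

lemma ofReal_abs_toReal_sub {x x' : ℝ≥0∞} (hx : x ≠ ∞) (hx' : x' ≠ ∞) :
    ENNReal.ofReal |x.toReal - x'.toReal| = x - x' + (x' - x) := by
  wlog h : x' ≤ x generalizing x x'
  · rw [abs_sub_comm, add_comm]
    exact this hx' hx (le_of_not_ge h)
  rw [tsub_eq_zero_of_le h, add_zero, abs_of_nonneg (sub_nonneg.2 (ENNReal.toReal_mono hx h)),
    ← ENNReal.toReal_sub_of_le h hx, ENNReal.ofReal_toReal (ENNReal.sub_ne_top hx)]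

lemma tsub_add_tsub_eq_top {x x' : ℝ≥0∞} (h : ¬(x = ∞ ↔ x' = ∞)) : x - x' + (x' - x) = ∞ := by
  rcases eq_or_ne x ∞ with rfl | hx <;> simp_all

lemma ofReal_abs_toReal_mul_sub_le {a : ℝ} {n : ℕ} (ha : 0 ≤ a) (han : a ≤ n) {y y' : ℝ≥0∞}
    (hy : y ≠ ∞) (hy' : y' ≠ ∞) :
    ENNReal.ofReal |y.toReal * a - y'.toReal * a| ≤ n * (y - y' + (y' - y)) := by
  rw [← ofReal_abs_toReal_sub hy hy', ← ENNReal.ofReal_natCast, ← ENNReal.ofReal_mul n.cast_nonneg,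
    ← sub_mul, abs_mul, abs_of_nonneg ha, mul_comm]
  exact ENNReal.ofReal_le_ofReal (mul_le_mul_of_nonneg_right han (abs_nonneg _))

/-- `F(1/w₁, …, 1/w_d)`, with `1/0 = ∞`. -/
noncomputable def cdfRecip {Ω : Type*} [MeasurableSpace Ω] (μ : Measure Ω) {d : ℕ}
    (X : Fin d → Ω → ℝ) (w : Fin d → ℝ) : ℝ :=
  μ.real {ω | ∀ i, w i * X i ω ≤ 1}

/-- The stable tail dependence function `ℓ(w) = -log F(1/w₁, …, 1/w_d)`. -/
noncomputable def tailDep {Ω : Type*} [MeasurableSpace Ω] (μ : Measure Ω) {d : ℕ}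
    (X : Fin d → Ω → ℝ) (w : Fin d → ℝ) : ℝ :=
  -Real.log (cdfRecip μ X w)

section TailDep

variable {Ω : Type*} [MeasurableSpace Ω] {μ : Measure Ω} {d : ℕ} {X : Fin d → Ω → ℝ}

lemma measureReal_mul_le_one [IsProbabilityMeasure μ] (hX : IsMEVFrechet μ X) (i : Fin d)
    {v : ℝ} (hv : 0 ≤ v) :
    μ.real {ω | v * X i ω ≤ 1} = Real.exp (-v) := by
  rcases hv.eq_or_lt with rfl | hv
  · simp
  have hset : {ω | v * X i ω ≤ 1} = {ω | X i ω ≤ v⁻¹} := by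
    ext ω; simp only [Set.mem_ofPred_eq, ← le_div_iff₀' hv, one_div]
  have := hX.frechet i v⁻¹ (inv_pos.2 hv)
  rw [inv_inv] at this
  rwa [hset]

lemma measureReal_mul_le_one_diff_le [IsProbabilityMeasure μ] (hX : IsMEVFrechet μ X)
    (i : Fin d) {v w : ℝ} (hv : 0 ≤ v) (hvw : v ≤ w) :
    μ.real ({ω | v * X i ω ≤ 1} \ {ω | w * X i ω ≤ 1}) ≤ w - v := by
  have hsub : {ω | w * X i ω ≤ 1} ⊆ {ω | v * X i ω ≤ 1} := fun ω =>
    mul_le_one_of_le_of_mul_le_one hv hvw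
  rw [measureReal_sdiff hsub (measurableSet_le (measurable_const.mul (hX.meas i))
    measurable_const), measureReal_mul_le_one hX i hv,
    measureReal_mul_le_one hX i (hv.trans hvw)]
  exact Real.exp_neg_sub_exp_neg_le hv hvw

lemma cdfRecip_sub_le [IsProbabilityMeasure μ] (hX : IsMEVFrechet μ X) {v w : Fin d → ℝ}
    (hv : 0 ≤ v) (hvw : v ≤ w) :
    cdfRecip μ X v - cdfRecip μ X w ≤ ∑ i, (w i - v i) := by
  have hsub : {ω | ∀ i, v i * X i ω ≤ 1} ⊆ {ω | ∀ i, w i * X i ω ≤ 1} ∪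
      ⋃ i, ({ω | v i * X i ω ≤ 1} \ {ω | w i * X i ω ≤ 1}) := by
    intro ω hω
    by_cases h : ∀ i, w i * X i ω ≤ 1
    · exact Or.inl h
    · simp only [not_forall, not_le] at h
      obtain ⟨i, hi⟩ := h
      exact Or.inr (Set.mem_iUnion.2 ⟨i, hω i, hi.not_ge⟩)
  have hle : cdfRecip μ X v ≤ cdfRecip μ X w + ∑ i, (w i - v i) := calc
    cdfRecip μ X v ≤ μ.real ({ω | ∀ i, w i * X i ω ≤ 1} ∪
        ⋃ i, ({ω | v i * X i ω ≤ 1} \ {ω | w i * X i ω ≤ 1})) := measureReal_mono hsub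
    _ ≤ cdfRecip μ X w + ∑ i, μ.real ({ω | v i * X i ω ≤ 1} \ {ω | w i * X i ω ≤ 1}) :=
      (measureReal_union_le _ _).trans (add_le_add le_rfl (measureReal_iUnion_fintype_le _))
    _ ≤ cdfRecip μ X w + ∑ i, (w i - v i) := by
      gcongr with i
      exact measureReal_mul_le_one_diff_le hX i (hv i) (hvw i)
  linarith

lemma one_sub_sum_le_cdfRecip [IsProbabilityMeasure μ] (hX : IsMEVFrechet μ X)
    {w : Fin d → ℝ} (hw : 0 ≤ w) :
    1 - ∑ i, w i ≤ cdfRecip μ X w := by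
  have h := cdfRecip_sub_le hX le_rfl hw
  simp only [cdfRecip, Pi.zero_apply, zero_mul, zero_le_one, implies_true, Set.ofPred_true,
    probReal_univ, sub_zero] at h ⊢
  linarith

lemma tendsto_cdfRecip_fill_zero [IsFiniteMeasure μ] (w : Fin d → ℝ) {r : ℝ} (hr : 0 < r) :
    Tendsto (fun n : ℕ => cdfRecip μ X fun i => if w i = 0 then r / (n + 1) else w i) atTop
      (𝓝 (cdfRecip μ X w)) := by
  set E : ℕ → Set Ω := fun n => {ω | ∀ i, (if w i = 0 then r / (n + 1) else w i) * X i ω ≤ 1}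
  have hmono : Monotone E := by
    intro m n hmn ω hω i
    have := hω i
    split_ifs at this ⊢
    · exact mul_le_one_of_le_of_mul_le_one (by positivity) (by gcongr) this
    · exact this
  have hunion : ⋃ n, E n = {ω | ∀ i, w i * X i ω ≤ 1} := by
    ext ω
    simp only [E, Set.mem_iUnion, Set.mem_ofPred_eq]
    constructor
    · rintro ⟨n, hn⟩ i
      have := hn i
      split_ifs at this with hi
      · simp [hi]
      · exact this
    · intro hω
      have hsmall : Tendsto (fun n : ℕ => r / (n + 1)) atTop (𝓝 0) := by
        simpa [div_eq_mul_inv] using tendsto_one_div_add_atTop_nhds_zero_nat.const_mul r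
      have hev : ∀ᶠ n : ℕ in atTop, ∀ i,
          (if w i = 0 then r / (n + 1) else w i) * X i ω ≤ 1 := by
        refine eventually_all.2 fun i => ?_
        split_ifs
        · exact (hsmall.mul_const (X i ω)).eventually (ge_mem_nhds (by simp))
        · exact Eventually.of_forall fun _ => hω i
      exact hev.exists
  have := tendsto_measure_iUnion_atTop (μ := μ) hmono
  rw [hunion] at this
  exact (ENNReal.tendsto_toReal (measure_ne_top μ _)).comp this

lemma cdfRecip_eq_jointCDF_inv {v : Fin d → ℝ} (hv : ∀ i, 0 < v i) :
    cdfRecip μ X v = jointCDF μ X fun i => (v i)⁻¹ := by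
  simp only [cdfRecip, jointCDF, ← le_div_iff₀' (hv _), one_div]
  rfl

lemma cdfRecip_smul [IsFiniteMeasure μ] (hX : IsMEVFrechet μ X) {c : ℝ} (hc : 0 < c)
    {w : Fin d → ℝ} (hw : 0 ≤ w) :
    cdfRecip μ X (c • w) = cdfRecip μ X w ^ c := by
  -- Max-stability only speaks about finite arguments, i.e. positive weights.
  set v : ℕ → Fin d → ℝ := fun n i => if w i = 0 then 1 / (n + 1) else w i
  have hv : ∀ n i, 0 < v n i := by
    intro n i
    simp only [v]
    split_ifs with hi
    · positivity
    · exact (hw i).lt_of_ne' hi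
  have hstep : ∀ n, cdfRecip μ X (c • v n) = cdfRecip μ X (v n) ^ c := by
    intro n
    have hcv : ∀ i, 0 < (c • v n) i := fun i => mul_pos hc (hv n i)
    rw [cdfRecip_eq_jointCDF_inv hcv, cdfRecip_eq_jointCDF_inv (hv n),
      ← hX.maxStable c hc _ fun i => inv_pos.2 (hcv i)]
    congr 2
    funext i
    simp only [Pi.smul_apply, smul_eq_mul]
    field_simp [hc.ne', (hv n i).ne']
  have hfill : ∀ n, c • v n = fun i => if (c • w) i = 0 then c / (n + 1) else (c • w) i := by
    intro n
    funext i
    simp only [v, Pi.smul_apply, smul_eq_mul, mul_eq_zero, hc.ne', false_or]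
    split_ifs <;> ring
  have hleft := tendsto_cdfRecip_fill_zero (μ := μ) (X := X) (c • w) hc
  have hright := ((Real.continuousAt_rpow_const _ c (Or.inr hc.le)).tendsto).comp
    (tendsto_cdfRecip_fill_zero (μ := μ) (X := X) w one_pos)
  simp only [← hfill, hstep] at hleft
  exact tendsto_nhds_unique hleft hright

lemma cdfRecip_pos [IsProbabilityMeasure μ] (hX : IsMEVFrechet μ X) {w : Fin d → ℝ}
    (hw : 0 ≤ w) : 0 < cdfRecip μ X w := by
  set c := ∑ i, w i + 1
  have hc : 0 < c := by have := Finset.sum_nonneg fun i (_ : i ∈ univ) => hw i; linarith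
  have hsum : ∑ i, (c⁻¹ • w) i < 1 := by
    simp only [Pi.smul_apply, smul_eq_mul, ← Finset.mul_sum]
    rw [inv_mul_lt_one₀ hc]
    linarith
  have hscaled : 0 < cdfRecip μ X (c⁻¹ • w) := by
    linarith [one_sub_sum_le_cdfRecip hX (smul_nonneg (inv_nonneg.2 hc.le) hw)]
  rw [← smul_inv_smul₀ hc.ne' w, cdfRecip_smul hX hc (smul_nonneg (inv_nonneg.2 hc.le) hw)]
  exact Real.rpow_pos_of_pos hscaled c

lemma tailDep_smul [IsProbabilityMeasure μ] (hX : IsMEVFrechet μ X) {c : ℝ} (hc : 0 ≤ c)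
    {w : Fin d → ℝ} (hw : 0 ≤ w) : tailDep μ X (c • w) = c * tailDep μ X w := by
  rcases hc.eq_or_lt with rfl | hc
  · simp [tailDep, cdfRecip]
  rw [tailDep, tailDep, cdfRecip_smul hX hc hw, Real.log_rpow (cdfRecip_pos hX hw)]
  ring

lemma tailDep_mono [IsProbabilityMeasure μ] (hX : IsMEVFrechet μ X) {v w : Fin d → ℝ}
    (hv : 0 ≤ v) (hvw : v ≤ w) : tailDep μ X v ≤ tailDep μ X w := by
  have hsub : {ω | ∀ i, w i * X i ω ≤ 1} ⊆ {ω | ∀ i, v i * X i ω ≤ 1} := fun ω hω i =>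
    mul_le_one_of_le_of_mul_le_one (hv i) (hvw i) (hω i)
  exact neg_le_neg (Real.log_le_log (cdfRecip_pos hX (hv.trans hvw)) (measureReal_mono hsub))

lemma tailDep_sub_le [IsProbabilityMeasure μ] (hX : IsMEVFrechet μ X) {v w : Fin d → ℝ}
    (hv : 0 ≤ v) (hvw : v ≤ w) : tailDep μ X w - tailDep μ X v ≤ ∑ i, (w i - v i) := by
  set K := ∑ i, (w i - v i)
  set D := ∑ i, w i
  have hK : 0 ≤ K := Finset.sum_nonneg fun i _ => sub_nonneg.2 (hvw i)
  have hD : 0 ≤ D := Finset.sum_nonneg fun i _ => (hv i).trans (hvw i)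
  -- Rescale by `c⁻¹`, where `F ≈ 1` and `log` is nearly linear, then let `c → ∞`.
  have hbound : ∀ c, D < c → tailDep μ X w - tailDep μ X v ≤ K / (1 - D / c) := by
    intro c hDc
    have hc : 0 < c := hD.trans_lt hDc
    have hc' : 0 ≤ c⁻¹ := inv_nonneg.2 hc.le
    set p := cdfRecip μ X (c⁻¹ • w)
    set p' := cdfRecip μ X (c⁻¹ • v)
    have hlow : 1 - D / c ≤ p := by
      have := one_sub_sum_le_cdfRecip hX (smul_nonneg hc' (hv.trans hvw))
      simpa only [Pi.smul_apply, smul_eq_mul, inv_mul_eq_div, ← Finset.sum_div] using this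
    have hgap : p' - p ≤ K / c := by
      have := cdfRecip_sub_le hX (smul_nonneg hc' hv) (smul_le_smul_of_nonneg_left hvw hc')
      simpa only [Pi.smul_apply, smul_eq_mul, inv_mul_eq_div, ← sub_div, ← Finset.sum_div]
        using this
    have hpos : 0 < 1 - D / c := sub_pos.2 ((div_lt_one hc).2 hDc)
    calc tailDep μ X w - tailDep μ X v = c * (Real.log p' - Real.log p) := by
          rw [← smul_inv_smul₀ hc.ne' w, ← smul_inv_smul₀ hc.ne' v,
            tailDep_smul hX hc.le (smul_nonneg hc' (hv.trans hvw)),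
            tailDep_smul hX hc.le (smul_nonneg hc' hv), tailDep, tailDep]
          ring
      _ ≤ c * ((p' - p) / p) := by
          gcongr
          exact Real.log_sub_log_le_div (hpos.trans_le hlow) (cdfRecip_pos hX (smul_nonneg hc' hv))
      _ ≤ c * ((K / c) / (1 - D / c)) :=
          mul_le_mul_of_nonneg_left (div_le_div₀ (by positivity) hgap hpos hlow) hc.le
      _ = K / (1 - D / c) := by field_simp
  have hlim : Tendsto (fun c => K / (1 - D / c)) atTop (𝓝 K) := by
    have h : Tendsto (fun c : ℝ => 1 - D / c) atTop (𝓝 (1 - 0)) :=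
      tendsto_const_nhds.sub (tendsto_const_nhds.div_atTop tendsto_id)
    have := (tendsto_const_nhds (x := K)).div h (by norm_num)
    rwa [sub_zero, div_one] at this
  exact ge_of_tendsto hlim ((eventually_gt_atTop D).mono hbound)

lemma tailDep_nonneg [IsProbabilityMeasure μ] (hX : IsMEVFrechet μ X) {w : Fin d → ℝ}
    (hw : 0 ≤ w) : 0 ≤ tailDep μ X w := by
  simpa [tailDep, cdfRecip] using tailDep_mono hX le_rfl hw

lemma tailDep_le_sum [IsProbabilityMeasure μ] (hX : IsMEVFrechet μ X) {w : Fin d → ℝ}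
    (hw : 0 ≤ w) : tailDep μ X w ≤ ∑ i, w i := by
  simpa [tailDep, cdfRecip] using tailDep_sub_le hX le_rfl hw

lemma abs_tailDep_add_smul_sub_le [IsProbabilityMeasure μ] (hX : IsMEVFrechet μ X)
    {v e : Fin d → ℝ} (hv : 0 ≤ v) (he : 0 ≤ e) {a a' : ℝ} (ha : 0 ≤ a) (ha' : 0 ≤ a') :
    |(a - a') * tailDep μ X e - (tailDep μ X (v + a • e) - tailDep μ X (v + a' • e))|
      ≤ (∑ i, e i) * |a - a'| := by
  wlog h : a' ≤ a generalizing a a'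
  · rw [abs_sub_comm a, ← abs_neg]
    convert this ha' ha (le_of_not_ge h) using 2
    ring
  have hv' : 0 ≤ v + a' • e := add_nonneg hv (smul_nonneg ha' he)
  have hle : v + a' • e ≤ v + a • e := add_le_add_right (smul_le_smul_of_nonneg_right h he) v
  have hsum : ∑ i, ((v + a • e) i - (v + a' • e) i) = (a - a') * ∑ i, e i := by
    rw [Finset.mul_sum]
    refine Finset.sum_congr rfl fun i _ => ?_
    simp only [Pi.add_apply, Pi.smul_apply, smul_eq_mul]
    ring
  have he₁ := tailDep_nonneg hX he
  have he₂ := tailDep_le_sum hX he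
  have hw₁ := sub_nonneg.2 (tailDep_mono hX hv' hle)
  have hw₂ := hsum ▸ tailDep_sub_le hX hv' hle
  rw [abs_of_nonneg (sub_nonneg.2 h), abs_sub_le_iff]
  constructor <;> nlinarith

end TailDep

def indicatorWeight {d : ℕ} (I : Finset (Fin d)) : Fin d → ℝ :=
  fun i => if i ∈ I then 1 else 0

lemma indicatorWeight_nonneg {d : ℕ} (I : Finset (Fin d)) : 0 ≤ indicatorWeight I := fun i => by
  unfold indicatorWeight; split_ifs <;> norm_num

lemma sum_indicatorWeight {d : ℕ} (I : Finset (Fin d)) : ∑ i, indicatorWeight I i = I.card := by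
  simp [indicatorWeight]

noncomputable def lambdaU {Ω : Type*} [MeasurableSpace Ω] (μ : Measure Ω) {d : ℕ}
    (X : Fin d → Ω → ℝ) (I₁ I₂ : Finset (Fin d)) (x y : ℝ) : ℝ :=
  x * extCoef μ X I₁ + y * extCoef μ X I₂
    - tailDep μ X (x • indicatorWeight I₁ + y • indicatorWeight I₂)

section LambdaU

variable {Ω : Type*} [MeasurableSpace Ω] {μ : Measure Ω} {d : ℕ} {X : Fin d → Ω → ℝ}
  {I₁ I₂ : Finset (Fin d)}

lemma mevL_inv_eq_tailDep (hdisj : Disjoint I₁ I₂) {s t : ℝ} (hs : 0 < s) (ht : 0 < t) :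
    mevL μ X I₁ I₂ s⁻¹ t⁻¹ = tailDep μ X (s • indicatorWeight I₁ + t • indicatorWeight I₂) := by
  have hset : {ω | (∀ i ∈ I₁, X i ω ≤ s⁻¹) ∧ ∀ j ∈ I₂, X j ω ≤ t⁻¹} =
      {ω | ∀ i, (s • indicatorWeight I₁ + t • indicatorWeight I₂) i * X i ω ≤ 1} := by
    ext ω
    simp only [Set.mem_ofPred_eq, Pi.add_apply, Pi.smul_apply, indicatorWeight, smul_eq_mul]
    constructor
    · rintro ⟨h₁, h₂⟩ i
      by_cases hi₁ : i ∈ I₁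
      · simpa [hi₁, Finset.disjoint_left.1 hdisj hi₁, ← le_div_iff₀' hs] using h₁ i hi₁
      by_cases hi₂ : i ∈ I₂
      · simpa [hi₁, hi₂, ← le_div_iff₀' ht] using h₂ i hi₂
      · simp [hi₁, hi₂]
    · intro h
      refine ⟨fun i hi => ?_, fun j hj => ?_⟩
      · simpa [hi, Finset.disjoint_left.1 hdisj hi, ← le_div_iff₀' hs] using h i
      · simpa [hj, Finset.disjoint_right.1 hdisj hj, ← le_div_iff₀' ht] using h j
  rw [mevL, tailDep, cdfRecip, hset]
  rfl

lemma extCoef_eq_tailDep (I : Finset (Fin d)) :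
    extCoef μ X I = tailDep μ X (indicatorWeight I) := by
  have h₀ : indicatorWeight (∅ : Finset (Fin d)) = 0 := by funext i; simp [indicatorWeight]
  simpa [extCoef, h₀] using
    mevL_inv_eq_tailDep (μ := μ) (X := X) (disjoint_empty_right I) one_pos one_pos

lemma extCoef_nonneg [IsProbabilityMeasure μ] (hX : IsMEVFrechet μ X) (I : Finset (Fin d)) :
    0 ≤ extCoef μ X I := by
  simpa [extCoef_eq_tailDep] using tailDep_nonneg hX (indicatorWeight_nonneg I)

lemma extCoef_le_card [IsProbabilityMeasure μ] (hX : IsMEVFrechet μ X) (I : Finset (Fin d)) :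
    extCoef μ X I ≤ I.card := by
  simpa [extCoef_eq_tailDep, sum_indicatorWeight] using
    tailDep_le_sum hX (indicatorWeight_nonneg I)

lemma abs_lambdaU_sub_le [IsProbabilityMeasure μ] (hX : IsMEVFrechet μ X) {s t s' t' : ℝ}
    (hs : 0 ≤ s) (ht : 0 ≤ t) (hs' : 0 ≤ s') (ht' : 0 ≤ t') :
    |lambdaU μ X I₁ I₂ s t - lambdaU μ X I₁ I₂ s' t'|
      ≤ I₁.card * |s - s'| + I₂.card * |t - t'| := by
  have h₁ := abs_tailDep_add_smul_sub_le hX (smul_nonneg ht (indicatorWeight_nonneg I₂))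
    (indicatorWeight_nonneg I₁) hs hs'
  have h₂ := abs_tailDep_add_smul_sub_le hX (smul_nonneg hs' (indicatorWeight_nonneg I₁))
    (indicatorWeight_nonneg I₂) ht ht'
  rw [add_comm (t • _), add_comm (t • _)] at h₁
  rw [← extCoef_eq_tailDep, sum_indicatorWeight] at h₁ h₂
  calc |lambdaU μ X I₁ I₂ s t - lambdaU μ X I₁ I₂ s' t'|
      = |((s - s') * extCoef μ X I₁
            - (tailDep μ X (s • indicatorWeight I₁ + t • indicatorWeight I₂)
              - tailDep μ X (s' • indicatorWeight I₁ + t • indicatorWeight I₂)))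
          + ((t - t') * extCoef μ X I₂
            - (tailDep μ X (s' • indicatorWeight I₁ + t • indicatorWeight I₂)
              - tailDep μ X (s' • indicatorWeight I₁ + t' • indicatorWeight I₂)))| := by
        unfold lambdaU; ring_nf
    _ ≤ I₁.card * |s - s'| + I₂.card * |t - t'| := (abs_add_le _ _).trans (add_le_add h₁ h₂)

lemma lambdaUExt_eq_lambdaU [IsProbabilityMeasure μ] (hX : IsMEVFrechet μ X)
    (hdisj : Disjoint I₁ I₂) {x y : ℝ≥0∞} (hx : x ≠ ∞) (hy : y ≠ ∞) :
    lambdaUExt μ X I₁ I₂ x y = lambdaU μ X I₁ I₂ x.toReal y.toReal := by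
  have hsmul : ∀ (I : Finset (Fin d)) (z : ℝ≥0∞),
      tailDep μ X (z.toReal • indicatorWeight I) = z.toReal * extCoef μ X I := fun I z => by
    rw [tailDep_smul hX ENNReal.toReal_nonneg (indicatorWeight_nonneg I), extCoef_eq_tailDep]
  unfold lambdaUExt lambdaU
  rcases eq_or_ne x 0 with rfl | hx₀
  · simp [hsmul]
  rcases eq_or_ne y 0 with rfl | hy₀
  · simp [hsmul]
  rw [if_neg (not_or.2 ⟨hx₀, hy₀⟩), if_neg hx, if_neg hy,
    mevL_inv_eq_tailDep hdisj (ENNReal.toReal_pos hx₀ hx) (ENNReal.toReal_pos hy₀ hy)]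

lemma lambdaUExt_top_left (y : ℝ≥0∞) : lambdaUExt μ X I₁ I₂ ∞ y = y.toReal * extCoef μ X I₂ := by
  rcases eq_or_ne y 0 with rfl | hy₀ <;> simp [lambdaUExt, *]

lemma lambdaUExt_top_right {x : ℝ≥0∞} (hx : x ≠ ∞) :
    lambdaUExt μ X I₁ I₂ x ∞ = x.toReal * extCoef μ X I₁ := by
  rcases eq_or_ne x 0 with rfl | hx₀ <;> simp [lambdaUExt, *]

end LambdaU

open ENNReal in
/-- Lipschitz-type bound: for all `(x,y), (x*,y*) ∈ [0,∞]² \ {(∞,∞)}`,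
`|Λ_U^{(I₁,I₂)}(x,y) - Λ_U^{(I₁,I₂)}(x*,y*)| ≤ |I₁|·|x - x*| + |I₂|·|y - y*|`
(absolute differences of extended reals taken as `(a - b) + (b - a)` in `[0,∞]`). -/
theorem statement6 {Ω : Type*} [MeasurableSpace Ω] (μ : Measure Ω) [IsProbabilityMeasure μ]
    {d : ℕ} (X : Fin d → Ω → ℝ) (hX : IsMEVFrechet μ X)
    (I₁ I₂ : Finset (Fin d)) (h1 : I₁.Nonempty) (h2 : I₂.Nonempty) (hdisj : Disjoint I₁ I₂)
    (x y x' y' : ℝ≥0∞) (hxy : ¬(x = ∞ ∧ y = ∞)) (hxy' : ¬(x' = ∞ ∧ y' = ∞)) :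
    ENNReal.ofReal |lambdaUExt μ X I₁ I₂ x y - lambdaUExt μ X I₁ I₂ x' y'|
      ≤ (I₁.card : ℝ≥0∞) * ((x - x') + (x' - x))
        + (I₂.card : ℝ≥0∞) * ((y - y') + (y' - y)) := by
  by_cases hxx' : x = ∞ ↔ x' = ∞
  swap
  · simp [tsub_add_tsub_eq_top hxx', ENNReal.mul_top, h1.ne_empty]
  by_cases hyy' : y = ∞ ↔ y' = ∞
  swap
  · simp [tsub_add_tsub_eq_top hyy', ENNReal.mul_top, h2.ne_empty]
  rcases eq_or_ne x ∞ with rfl | hx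
  · obtain rfl := hxx'.1 rfl
    rw [lambdaUExt_top_left, lambdaUExt_top_left]
    exact le_add_left (ofReal_abs_toReal_mul_sub_le (extCoef_nonneg hX I₂)
      (extCoef_le_card hX I₂) (fun h => hxy ⟨rfl, h⟩) (fun h => hxy' ⟨rfl, h⟩))
  have hx' : x' ≠ ∞ := mt hxx'.2 hx
  rcases eq_or_ne y ∞ with rfl | hy
  · obtain rfl := hyy'.1 rfl
    rw [lambdaUExt_top_right hx, lambdaUExt_top_right hx']
    exact le_add_right (ofReal_abs_toReal_mul_sub_le (extCoef_nonneg hX I₁)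
      (extCoef_le_card hX I₁) hx hx')
  have hy' : y' ≠ ∞ := mt hyy'.2 hy
  rw [lambdaUExt_eq_lambdaU hX hdisj hx hy, lambdaUExt_eq_lambdaU hX hdisj hx' hy',
    ← ofReal_abs_toReal_sub hx hx', ← ofReal_abs_toReal_sub hy hy', ← ENNReal.ofReal_natCast,
    ← ENNReal.ofReal_natCast, ← ENNReal.ofReal_mul (Nat.cast_nonneg _),
    ← ENNReal.ofReal_mul (Nat.cast_nonneg _), ← ENNReal.ofReal_add (by positivity) (by positivity)]
  exact ENNReal.ofReal_le_ofReal (abs_lambdaU_sub_le hX ENNReal.toReal_nonneg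
    ENNReal.toReal_nonneg ENNReal.toReal_nonneg ENNReal.toReal_nonneg)
end

section
/- Let X = (X₁,…,X_d) be a random vector with continuous marginal distribution functions F₁,…,F_d and let I₁, I₂ be disjoint non-empty subsets of {1,…,d}. Assume that for all non-empty I ⊆ I₁ and non-empty J ⊆ I₂ there exist η_{I,J} ∈ (0,1] and a function L_{I,J} slowly varying at ∞ such that P( min_{i∈I, j∈J}( F_i(X_i), F_j(X_j) ) > 1 − 1/t ) = t^{-1/η_{I,J}} L_{I,J}(t) for all t, and assume that there exist η_{(I₁,I₂)} ∈ (0,1] and a function L_{(I₁,I₂)} slowly varying at ∞ with P( M(I₁) > 1 − 1/t, M(I₂) > 1 − 1/t ) = t^{-1/η_{(I₁,I₂)}} L_{(I₁,I₂)}(t). Then η_{(I₁,I₂)} = max{ η_{{i},{j}} : i ∈ I₁, j ∈ I₂ }. -/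
/-!
The event `{M(I₁) > u, M(I₂) > u}` is the union over `(i, j) ∈ I₁ × I₂` of the events
`{F_i(X_i) > u, F_j(X_j) > u}`, so its probability lies between the largest of their
probabilities and their sum. All these probabilities are regularly varying with index `-1/η`, and
a regularly varying function can dominate another one, or a finite sum of others, only if its
index is at least as large: otherwise the ratio of the two would grow by a fixed factor `c > 1`
under every dilation `t ↦ 2t`, which is impossible for a ratio bounded by `1`.
The iteration along `t, 2t, 4t, …` needs the slowly varying functions only at the single
ratio `2`, so no uniform convergence theorem is required.
-/

open MeasureTheory Filter Finset

/-- `L` is slowly varying at `∞`: `L(tx)/L(t) → 1` as `t → ∞` for every `x > 0`. -/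
def SlowlyVarying (L : ℝ → ℝ) : Prop :=
  ∀ x : ℝ, 0 < x → Tendsto (fun t => L (t * x) / L t) atTop (nhds 1)

open Topology

lemma not_eventually_mul_le_comp_mul {r : ℝ → ℝ} {c x M : ℝ} (hc : 1 < c) (hx : 1 < x)
    (hr : ∀ᶠ t in atTop, 0 < r t ∧ r t ≤ M) : ¬ ∀ᶠ t in atTop, c * r t ≤ r (t * x) := by
  intro hstep
  obtain ⟨T, hT⟩ := eventually_atTop.1 (hr.and hstep)
  set T' := max T 1
  have hge : ∀ n : ℕ, T ≤ T' * x ^ n := fun n =>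
    (le_max_left T 1).trans (le_mul_of_one_le_right (by positivity) (one_le_pow₀ hx.le))
  have hgrow : ∀ n : ℕ, c ^ n * r T' ≤ r (T' * x ^ n) := by
    intro n
    induction n with
    | zero => simp
    | succ n ih =>
      calc c ^ (n + 1) * r T' = c * (c ^ n * r T') := by ring
        _ ≤ c * r (T' * x ^ n) := by gcongr
        _ ≤ r (T' * x ^ n * x) := (hT _ (hge n)).2
        _ = r (T' * x ^ (n + 1)) := by rw [pow_succ, mul_assoc]
  obtain ⟨n, hn⟩ := (((tendsto_pow_atTop_atTop_of_one_lt hc).atTop_mul_const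
    (hT T' (le_max_left _ _)).1.1).eventually_gt_atTop M).exists
  exact hn.not_ge ((hgrow n).trans (hT _ (hge n)).1.2)

lemma le_of_eventually_le_of_growth {f g : ℝ → ℝ} {a b x : ℝ} (hx : 1 < x)
    (hfg : ∀ᶠ t in atTop, 0 < f t ∧ f t ≤ g t)
    (hf : ∀ c < x ^ a, ∀ᶠ t in atTop, c * f t ≤ f (t * x))
    (hg : ∀ c > x ^ b, ∀ᶠ t in atTop, g (t * x) ≤ c * g t) : a ≤ b := by
  by_contra! hba
  have hxba : x ^ b < x ^ a := Real.rpow_lt_rpow_of_exponent_lt hx hba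
  have hxb : 0 < x ^ b := Real.rpow_pos_of_pos (by linarith) b
  obtain ⟨c₂, hbc₂, hc₂a⟩ := exists_between hxba
  obtain ⟨c₁, hc₂₁, hc₁a⟩ := exists_between hc₂a
  have hc₂ : 0 < c₂ := hxb.trans hbc₂
  have hfgx : ∀ᶠ t in atTop, 0 < f (t * x) ∧ f (t * x) ≤ g (t * x) :=
    (tendsto_id.atTop_mul_const (by linarith)).eventually hfg
  refine not_eventually_mul_le_comp_mul (r := fun t => f t / g t) (c := c₁ / c₂) (M := 1)
    ((one_lt_div hc₂).2 hc₂₁) hx ?_ ?_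
  · filter_upwards [hfg] with t ⟨hf0, hfg⟩
    exact ⟨div_pos hf0 (hf0.trans_le hfg), div_le_one_of_le₀ hfg (hf0.trans_le hfg).le⟩
  · filter_upwards [hfg, hfgx, hf c₁ hc₁a, hg c₂ hbc₂]
      with t ⟨hf0, hfg⟩ ⟨hfx0, hfgx⟩ hfx hgx
    calc c₁ / c₂ * (f t / g t) = c₁ * f t / (c₂ * g t) := (mul_div_mul_comm _ _ _ _).symm
      _ ≤ f (t * x) / g (t * x) := div_le_div₀ hfx0.le hfx (hfx0.trans_le hfgx) hgx

namespace SlowlyVarying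

variable {L : ℝ → ℝ} (hL : SlowlyVarying L) (hLpos : ∀ t, 0 < t → 0 < L t) {a c x : ℝ}
include hL hLpos

lemma tendsto_rpow_mul_div (hx : 0 < x) :
    Tendsto (fun t => (t * x) ^ a * L (t * x) / (t ^ a * L t)) atTop (𝓝 (x ^ a)) := by
  have h := (hL x hx).const_mul (x ^ a)
  rw [mul_one] at h
  refine h.congr' ?_
  filter_upwards [eventually_gt_atTop 0] with t ht
  have : t ^ a ≠ 0 := (Real.rpow_pos_of_pos ht a).ne'
  have : L t ≠ 0 := (hLpos t ht).ne'
  rw [Real.mul_rpow ht.le hx.le]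
  field_simp

lemma eventually_mul_le_rpow_mul (hx : 0 < x) (hc : c < x ^ a) :
    ∀ᶠ t in atTop, c * (t ^ a * L t) ≤ (t * x) ^ a * L (t * x) := by
  filter_upwards [(hL.tendsto_rpow_mul_div hLpos hx).eventually (lt_mem_nhds hc),
    eventually_gt_atTop 0] with t h ht
  exact ((lt_div_iff₀ (mul_pos (Real.rpow_pos_of_pos ht a) (hLpos t ht))).1 h).le

lemma eventually_rpow_mul_le_mul (hx : 0 < x) (hc : x ^ a < c) :
    ∀ᶠ t in atTop, (t * x) ^ a * L (t * x) ≤ c * (t ^ a * L t) := by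
  filter_upwards [(hL.tendsto_rpow_mul_div hLpos hx).eventually (gt_mem_nhds hc),
    eventually_gt_atTop 0] with t h ht
  exact ((div_lt_iff₀ (mul_pos (Real.rpow_pos_of_pos ht a) (hLpos t ht))).1 h).le

end SlowlyVarying

lemma exists_le_of_rpow_mul_le_sum {ι : Type*} {s : Finset ι} {L₀ : ℝ → ℝ} {L : ι → ℝ → ℝ}
    {a : ℝ} {b : ι → ℝ} (hL₀ : SlowlyVarying L₀) (hL₀pos : ∀ t, 0 < t → 0 < L₀ t)
    (hL : ∀ i ∈ s, SlowlyVarying (L i)) (hLpos : ∀ i ∈ s, ∀ t, 0 < t → 0 < L i t)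
    (hle : ∀ᶠ t in atTop, t ^ a * L₀ t ≤ ∑ i ∈ s, t ^ b i * L i t) : ∃ i ∈ s, a ≤ b i := by
  by_contra! hba
  obtain ⟨b', hb'a, hb'⟩ : ∃ b' < a, ∀ i ∈ s, b i ≤ b' := by
    rcases s.eq_empty_or_nonempty with rfl | hs
    · exact ⟨a - 1, by linarith, by simp⟩
    · exact ⟨s.sup' hs b, (sup'_lt_iff hs).2 hba, fun i hi => le_sup' b hi⟩
  refine hb'a.not_ge <| le_of_eventually_le_of_growth
    (g := fun t => ∑ i ∈ s, t ^ b i * L i t) one_lt_two ?_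
    (fun c hc => hL₀.eventually_mul_le_rpow_mul hL₀pos two_pos hc) fun c hc => ?_
  · filter_upwards [hle, eventually_gt_atTop 0] with t hle ht
    exact ⟨mul_pos (Real.rpow_pos_of_pos ht a) (hL₀pos t ht), hle⟩
  · have hterm : ∀ i ∈ s, ∀ᶠ t in atTop,
        (t * 2) ^ b i * L i (t * 2) ≤ c * (t ^ b i * L i t) := fun i hi =>
      (hL i hi).eventually_rpow_mul_le_mul (hLpos i hi) two_pos
        ((Real.rpow_le_rpow_of_exponent_le one_le_two (hb' i hi)).trans_lt hc)
    filter_upwards [(eventually_all_finset s).2 hterm] with t ht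
    rw [mul_sum]
    exact sum_le_sum ht

lemma le_of_rpow_mul_le_rpow_mul {L₁ L₂ : ℝ → ℝ} {a b : ℝ} (hL₁ : SlowlyVarying L₁)
    (hL₁pos : ∀ t, 0 < t → 0 < L₁ t) (hL₂ : SlowlyVarying L₂) (hL₂pos : ∀ t, 0 < t → 0 < L₂ t)
    (hle : ∀ᶠ t in atTop, t ^ a * L₁ t ≤ t ^ b * L₂ t) : a ≤ b := by
  obtain ⟨-, -, hab⟩ := exists_le_of_rpow_mul_le_sum (s := {()}) (b := fun _ => b) hL₁ hL₁pos
    (fun _ _ => hL₂) (fun _ _ => hL₂pos) (by simpa using hle)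
  exact hab

lemma neg_inv_le_neg_inv_iff {a b : ℝ} (ha : 0 < a) (hb : 0 < b) : -a⁻¹ ≤ -b⁻¹ ↔ a ≤ b := by
  rw [neg_le_neg_iff, inv_le_inv₀ hb ha]

section Msub

variable {Ω : Type*} [MeasurableSpace Ω] (μ : Measure Ω) {d : ℕ} (X : Fin d → Ω → ℝ)
  {I₁ I₂ : Finset (Fin d)} (h1 : I₁.Nonempty) (h2 : I₂.Nonempty) (u : ℝ)

lemma setOf_lt_Msub_and_lt_Msub_eq_biUnion :
    {ω | u < Msub μ X I₁ h1 ω ∧ u < Msub μ X I₂ h2 ω} =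
      ⋃ p ∈ I₁ ×ˢ I₂, {ω | ∀ k ∈ ({p.1} ∪ {p.2} : Finset (Fin d)),
        u < margCDF μ X k (X k ω)} := by
  ext ω
  simp only [Set.mem_ofPred_eq, Msub, lt_sup'_iff, Set.mem_iUnion, mem_product, mem_union,
    mem_singleton, forall_eq_or_imp, forall_eq, exists_prop, Prod.exists]
  aesop

lemma measureReal_lt_Msub_le_sum :
    μ.real {ω | u < Msub μ X I₁ h1 ω ∧ u < Msub μ X I₂ h2 ω} ≤
      ∑ p ∈ I₁ ×ˢ I₂, μ.real {ω | ∀ k ∈ ({p.1} ∪ {p.2} : Finset (Fin d)),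
        u < margCDF μ X k (X k ω)} := by
  rw [setOf_lt_Msub_and_lt_Msub_eq_biUnion]
  exact measureReal_biUnion_finset_le _ _

lemma measureReal_le_measureReal_lt_Msub [IsFiniteMeasure μ] {p : Fin d × Fin d}
    (hp : p ∈ I₁ ×ˢ I₂) :
    μ.real {ω | ∀ k ∈ ({p.1} ∪ {p.2} : Finset (Fin d)), u < margCDF μ X k (X k ω)} ≤
      μ.real {ω | u < Msub μ X I₁ h1 ω ∧ u < Msub μ X I₂ h2 ω} := by
  rw [setOf_lt_Msub_and_lt_Msub_eq_biUnion]
  exact measureReal_mono (Set.subset_biUnion_of_mem (u := fun p : Fin d × Fin d =>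
    {ω | ∀ k ∈ ({p.1} ∪ {p.2} : Finset (Fin d)), u < margCDF μ X k (X k ω)}) hp)
    (measure_ne_top μ _)

end Msub

theorem statement10_general {Ω : Type*} [MeasurableSpace Ω] (μ : Measure Ω) [IsProbabilityMeasure μ]
    {d : ℕ} (X : Fin d → Ω → ℝ)
    (I₁ I₂ : Finset (Fin d)) (h1 : I₁.Nonempty) (h2 : I₂.Nonempty)
    (η : Finset (Fin d) → Finset (Fin d) → ℝ)
    (L : Finset (Fin d) → Finset (Fin d) → ℝ → ℝ)
    (hη : ∀ I ⊆ I₁, ∀ J ⊆ I₂, I.Nonempty → J.Nonempty → 0 < η I J ∧ η I J ≤ 1)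
    (hLpos : ∀ I ⊆ I₁, ∀ J ⊆ I₂, I.Nonempty → J.Nonempty → ∀ t : ℝ, 0 < t → 0 < L I J t)
    (hLsv : ∀ I ⊆ I₁, ∀ J ⊆ I₂, I.Nonempty → J.Nonempty → SlowlyVarying (L I J))
    (hreg : ∀ I, I ⊆ I₁ → ∀ J, J ⊆ I₂ → I.Nonempty → J.Nonempty → ∀ t : ℝ, 0 < t →
      (μ {ω | ∀ k ∈ I ∪ J, 1 - 1 / t < margCDF μ X k (X k ω)}).toReal
        = t ^ (-(η I J)⁻¹) * L I J t)
    (η₀ : ℝ) (L₀ : ℝ → ℝ) (hη₀ : 0 < η₀ ∧ η₀ ≤ 1)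
    (hL₀pos : ∀ t : ℝ, 0 < t → 0 < L₀ t) (hL₀sv : SlowlyVarying L₀)
    (hreg₀ : ∀ t : ℝ, 0 < t →
      (μ {ω | 1 - 1 / t < Msub μ X I₁ h1 ω ∧ 1 - 1 / t < Msub μ X I₂ h2 ω}).toReal
        = t ^ (-η₀⁻¹) * L₀ t) :
    η₀ = (I₁ ×ˢ I₂).sup' (h1.product h2) (fun p => η {p.1} {p.2}) := by
  have hpair : ∀ p ∈ I₁ ×ˢ I₂, 0 < η {p.1} {p.2} ∧ (∀ t, 0 < t → 0 < L {p.1} {p.2} t) ∧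
      SlowlyVarying (L {p.1} {p.2}) ∧ ∀ t, 0 < t →
        (μ {ω | ∀ k ∈ ({p.1} ∪ {p.2} : Finset (Fin d)), 1 - 1 / t < margCDF μ X k (X k ω)}).toReal
          = t ^ (-(η {p.1} {p.2})⁻¹) * L {p.1} {p.2} t := by
    intro p hp
    have hI := singleton_subset_iff.2 (mem_product.1 hp).1
    have hJ := singleton_subset_iff.2 (mem_product.1 hp).2
    have hn := singleton_nonempty p.1
    have hm := singleton_nonempty p.2
    exact ⟨(hη _ hI _ hJ hn hm).1, hLpos _ hI _ hJ hn hm, hLsv _ hI _ hJ hn hm,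
      hreg _ hI _ hJ hn hm⟩
  have hpair_le : ∀ p ∈ I₁ ×ˢ I₂, ∀ t, 0 < t →
      t ^ (-(η {p.1} {p.2})⁻¹) * L {p.1} {p.2} t ≤ t ^ (-η₀⁻¹) * L₀ t := by
    intro p hp t ht
    rw [← (hpair p hp).2.2.2 t ht, ← hreg₀ t ht]
    exact measureReal_le_measureReal_lt_Msub μ X h1 h2 _ hp
  have hle_sum : ∀ t, 0 < t →
      t ^ (-η₀⁻¹) * L₀ t ≤ ∑ p ∈ I₁ ×ˢ I₂, t ^ (-(η {p.1} {p.2})⁻¹) * L {p.1} {p.2} t := by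
    intro t ht
    rw [← hreg₀ t ht, ← sum_congr rfl fun p hp => (hpair p hp).2.2.2 t ht]
    exact measureReal_lt_Msub_le_sum μ X h1 h2 _
  refine le_antisymm ?_ (sup'_le _ _ fun p hp => ?_)
  · obtain ⟨p, hp, hle⟩ := exists_le_of_rpow_mul_le_sum hL₀sv hL₀pos
      (fun p hp => (hpair p hp).2.2.1) (fun p hp => (hpair p hp).2.1)
      ((eventually_gt_atTop 0).mono hle_sum)
    exact ((neg_inv_le_neg_inv_iff hη₀.1 (hpair p hp).1).1 hle).trans
      (le_sup' (fun p => η {p.1} {p.2}) hp)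
  · obtain ⟨hηp, hLp, hSVp, -⟩ := hpair p hp
    exact (neg_inv_le_neg_inv_iff hηp hη₀.1).1 (le_of_rpow_mul_le_rpow_mul hSVp hLp hL₀sv hL₀pos
      ((eventually_gt_atTop 0).mono (hpair_le p hp)))

/-- If `P(min_{i∈I,j∈J}(F_i(X_i),F_j(X_j)) > 1 - 1/t) = t^{-1/η_{I,J}} L_{I,J}(t)`
regularly varying for all non-empty `I ⊆ I₁`, `J ⊆ I₂`, and
`P(M(I₁) > 1 - 1/t, M(I₂) > 1 - 1/t) = t^{-1/η_{(I₁,I₂)}} L_{(I₁,I₂)}(t)`, then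
`η_{(I₁,I₂)} = max{η_{{i},{j}} : i ∈ I₁, j ∈ I₂}`. -/
theorem statement10 {Ω : Type*} [MeasurableSpace Ω] (μ : Measure Ω) [IsProbabilityMeasure μ]
    {d : ℕ} (X : Fin d → Ω → ℝ) (hmeas : ∀ i, Measurable (X i))
    (hcont : ∀ i, Continuous (margCDF μ X i))
    (I₁ I₂ : Finset (Fin d)) (h1 : I₁.Nonempty) (h2 : I₂.Nonempty) (hdisj : Disjoint I₁ I₂)
    (η : Finset (Fin d) → Finset (Fin d) → ℝ)
    (L : Finset (Fin d) → Finset (Fin d) → ℝ → ℝ)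
    (hη : ∀ I ⊆ I₁, ∀ J ⊆ I₂, I.Nonempty → J.Nonempty → 0 < η I J ∧ η I J ≤ 1)
    (hLpos : ∀ I ⊆ I₁, ∀ J ⊆ I₂, I.Nonempty → J.Nonempty → ∀ t : ℝ, 0 < t → 0 < L I J t)
    (hLsv : ∀ I ⊆ I₁, ∀ J ⊆ I₂, I.Nonempty → J.Nonempty → SlowlyVarying (L I J))
    (hreg : ∀ I, I ⊆ I₁ → ∀ J, J ⊆ I₂ → I.Nonempty → J.Nonempty → ∀ t : ℝ, 0 < t →
      (μ {ω | ∀ k ∈ I ∪ J, 1 - 1 / t < margCDF μ X k (X k ω)}).toReal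
        = t ^ (-(η I J)⁻¹) * L I J t)
    (η₀ : ℝ) (L₀ : ℝ → ℝ) (hη₀ : 0 < η₀ ∧ η₀ ≤ 1)
    (hL₀pos : ∀ t : ℝ, 0 < t → 0 < L₀ t) (hL₀sv : SlowlyVarying L₀)
    (hreg₀ : ∀ t : ℝ, 0 < t →
      (μ {ω | 1 - 1 / t < Msub μ X I₁ h1 ω ∧ 1 - 1 / t < Msub μ X I₂ h2 ω}).toReal
        = t ^ (-η₀⁻¹) * L₀ t) :
    η₀ = (I₁ ×ˢ I₂).sup' (h1.product h2) (fun p => η {p.1} {p.2}) :=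
  statement10_general μ X I₁ I₂ h1 h2 η L hη hLpos hLsv hreg η₀ L₀ hη₀ hL₀pos hL₀sv hreg₀
end

section
/- Let X = (X₁,…,X_d) be a random vector whose joint distribution function F is a MEV distribution with unit Fréchet marginals, and set l(x₁,…,x_d) = −log F(x₁,…,x_d). Then for all x₁,…,x_d > 0, l(x₁,…,x_d) = E( F₁(X₁)^{x₁} ∨ … ∨ F_d(X_d)^{x_d} ) / ( 1 − E( F₁(X₁)^{x₁} ∨ … ∨ F_d(X_d)^{x_d} ) ); equivalently, E( F₁(X₁)^{x₁} ∨ … ∨ F_d(X_d)^{x_d} ) = l(x₁,…,x_d) / ( 1 + l(x₁,…,x_d) ). -/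
open MeasureTheory Filter Finset

/-! The random variable `V = max_i F_i(X_i)^{x_i}` satisfies, for `0 < t < 1`,
`{V ≤ t} = {X_i ≤ x_i / (-log t) for all i}`, so by max-stability
`P(V ≤ t) = F(x)^{-log t} = t^{l(x)}`. Hence `V` has density `l t^{l-1}` on `[0,1]` and
`E V = ∫₀¹ (1 - t^l) dt = l / (1 + l)`; the first identity is the second solved for `l`. -/

open Real Set Topology

theorem integral_eq_div_one_add_of_measureReal_le_eq_rpow {Ω : Type*} [MeasurableSpace Ω]
    {μ : Measure Ω} [IsProbabilityMeasure μ] {V : Ω → ℝ} (hV : Measurable V)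
    (hV0 : ∀ ω, 0 ≤ V ω) (hV1 : ∀ ω, V ω ≤ 1) {a : ℝ} (ha : 0 ≤ a)
    (hcdf : ∀ t ∈ Ioo (0 : ℝ) 1, μ.real {ω | V ω ≤ t} = t ^ a) :
    ∫ ω, V ω ∂μ = a / (1 + a) := by
  have hint : Integrable V μ :=
    Integrable.of_bound hV.aestronglyMeasurable 1
      (ae_of_all _ fun ω => by rw [norm_of_nonneg (hV0 ω)]; exact hV1 ω)
  have htail : ∀ t ∈ Ioo (0 : ℝ) 1, μ.real {ω | t < V ω} = 1 - t ^ a := by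
    intro t ht
    rw [← hcdf t ht, ← probReal_compl_eq_one_sub (measurableSet_le hV measurable_const)]
    simp only [compl_ofPred, not_le]
  have hvanish : ∀ t ∈ Ioi (0 : ℝ) \ Ioc 0 1, μ.real {ω | t < V ω} = 0 := by
    intro t ht
    have h1t : 1 < t := lt_of_not_ge fun h => ht.2 ⟨ht.1, h⟩
    have hempty : {ω | t < V ω} = ∅ :=
      eq_empty_of_forall_notMem fun ω hω => (hV1 ω).not_gt (h1t.trans hω)
    rw [hempty, measureReal_empty]
  calc ∫ ω, V ω ∂μ = ∫ t in Ioi 0, μ.real {ω | t < V ω} :=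
        hint.integral_eq_integral_meas_lt (ae_of_all _ hV0)
    _ = ∫ t in Ioo 0 1, μ.real {ω | t < V ω} := by
        rw [setIntegral_eq_of_subset_of_ae_sdiff_eq_zero nullMeasurableSet_Ioi
          Ioc_subset_Ioi_self (ae_of_all _ hvanish), integral_Ioc_eq_integral_Ioo]
    _ = ∫ t in (0)..1, (1 - t ^ a) := by
        rw [setIntegral_congr_fun measurableSet_Ioo htail,
          intervalIntegral.integral_of_le zero_le_one, integral_Ioc_eq_integral_Ioo]
    _ = a / (1 + a) := by
        rw [intervalIntegral.integral_sub intervalIntegrable_const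
            (intervalIntegral.intervalIntegrable_rpow (Or.inl ha)),
          integral_rpow (Or.inl (by linarith)), intervalIntegral.integral_const, one_rpow,
          zero_rpow (by linarith)]
        field_simp
        ring

section margCDF

variable {Ω : Type*} [MeasurableSpace Ω] (μ : Measure Ω) {d : ℕ}
  (X : Fin d → Ω → ℝ)

theorem margCDF_mono [IsFiniteMeasure μ] (i : Fin d) : Monotone (margCDF μ X i) :=
  fun _ _ huv => measureReal_mono fun _ hω => le_trans hω huv

theorem margCDF_le_one [IsProbabilityMeasure μ] (i : Fin d) (u : ℝ) : margCDF μ X i u ≤ 1 :=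
  measureReal_le_one

theorem jointCDF_le_margCDF [IsFiniteMeasure μ] (x : Fin d → ℝ) (i : Fin d) :
    jointCDF μ X x ≤ margCDF μ X i (x i) :=
  measureReal_mono fun _ hω => hω i

end margCDF

namespace IsMEVFrechet

variable {Ω : Type*} [MeasurableSpace Ω] {μ : Measure Ω} [IsProbabilityMeasure μ] {d : ℕ}
  {X : Fin d → Ω → ℝ}

theorem margCDF_of_nonpos (hX : IsMEVFrechet μ X) (i : Fin d) {u : ℝ} (hu : u ≤ 0) :
    margCDF μ X i u = 0 := by
  have hbound : ∀ᶠ v in 𝓝[>] (0 : ℝ), margCDF μ X i u ≤ exp (-v⁻¹) :=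
    eventually_nhdsWithin_of_forall fun v hv =>
      hX.frechet i v hv ▸ margCDF_mono μ X i (hu.trans (le_of_lt hv))
  have hlim : Tendsto (fun v : ℝ => exp (-v⁻¹)) (𝓝[>] 0) (𝓝 0) :=
    tendsto_exp_atBot.comp (tendsto_neg_atBot_iff.mpr tendsto_inv_nhdsGT_zero)
  exact le_antisymm (ge_of_tendsto hlim hbound) measureReal_nonneg

theorem margCDF_rpow_le_iff (hX : IsMEVFrechet μ X) (i : Fin d) {u a t : ℝ} (ha : 0 < a)
    (ht : t ∈ Ioo (0 : ℝ) 1) : margCDF μ X i u ^ a ≤ t ↔ u ≤ (-log t)⁻¹ * a := by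
  have hL : 0 < -log t := neg_pos.2 (log_neg ht.1 ht.2)
  rcases le_or_gt u 0 with hu | hu
  · rw [hX.margCDF_of_nonpos i hu, zero_rpow ha.ne']
    exact iff_of_true ht.1.le (hu.trans (by positivity))
  · rw [hX.frechet i u hu, ← exp_mul, ← le_log_iff_exp_le ht.1, neg_mul, neg_le, inv_mul_eq_div,
      inv_mul_eq_div, le_div_iff₀ hu, le_div_iff₀ hL, mul_comm]

theorem jointCDF_pos (hX : IsMEVFrechet μ X) {x : Fin d → ℝ} (hx : ∀ i, 0 < x i) :
    0 < jointCDF μ X x := by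
  have hcover : (⋃ n : ℕ, {ω | ∀ i, X i ω ≤ (n + 1 : ℝ) * x i}) = univ := by
    refine eq_univ_of_forall fun ω => mem_iUnion.2 ?_
    have hlarge : ∀ i, ∀ᶠ n : ℕ in atTop, X i ω ≤ (n + 1 : ℝ) * x i := fun i =>
      (tendsto_natCast_atTop_atTop.eventually_ge_atTop (X i ω / x i)).mono fun n hn => by
        rw [div_le_iff₀ (hx i)] at hn
        nlinarith [hx i]
    exact (eventually_all.2 hlarge).exists
  -- some scaled box has positive probability, and max-stability transports it back to `x`
  obtain ⟨n, hn⟩ : ∃ n : ℕ, μ {ω | ∀ i, X i ω ≤ (n + 1 : ℝ) * x i} ≠ 0 := by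
    by_contra! h
    simpa [hcover] using measure_iUnion_null h
  rw [← hX.maxStable (n + 1) (by positivity) x hx]
  exact rpow_pos_of_pos (ENNReal.toReal_pos hn (measure_ne_top μ _)) _

theorem jointCDF_lt_one (hX : IsMEVFrechet μ X) (hd : 0 < d) {x : Fin d → ℝ}
    (hx : ∀ i, 0 < x i) : jointCDF μ X x < 1 := by
  let i : Fin d := ⟨0, hd⟩
  calc jointCDF μ X x ≤ margCDF μ X i (x i) := jointCDF_le_margCDF μ X x i
    _ = exp (-(x i)⁻¹) := hX.frechet i _ (hx i)
    _ < 1 := exp_lt_one_iff.2 (neg_neg_of_pos (inv_pos.2 (hx i)))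

theorem stdf_pos (hX : IsMEVFrechet μ X) (hd : 0 < d) {x : Fin d → ℝ} (hx : ∀ i, 0 < x i) :
    0 < stdf μ X x :=
  neg_pos.2 (log_neg (hX.jointCDF_pos hx) (hX.jointCDF_lt_one hd hx))

theorem jointCDF_smul (hX : IsMEVFrechet μ X) {s : ℝ} (hs : 0 < s) {x : Fin d → ℝ}
    (hx : ∀ i, 0 < x i) : jointCDF μ X (fun i => s * x i) = exp (-(stdf μ X x / s)) := by
  have hF : 0 ≤ jointCDF μ X (fun i => s * x i) := measureReal_nonneg
  calc jointCDF μ X (fun i => s * x i) = (jointCDF μ X (fun i => s * x i) ^ s) ^ s⁻¹ := by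
        rw [← rpow_mul hF, mul_inv_cancel₀ hs.ne', rpow_one]
    _ = exp (-(stdf μ X x / s)) := by
        rw [hX.maxStable s hs x hx, rpow_def_of_pos (hX.jointCDF_pos hx), stdf]
        ring_nf

section Maximum

variable (hne : (univ : Finset (Fin d)).Nonempty)

theorem measurable_sup'_margCDF_rpow (hX : IsMEVFrechet μ X) (x : Fin d → ℝ) :
    Measurable fun ω => univ.sup' hne fun i => margCDF μ X i (X i ω) ^ x i := by
  have h : ∀ i, Measurable fun ω => margCDF μ X i (X i ω) ^ x i := fun i =>
    ((margCDF_mono μ X i).measurable.comp (hX.meas i)).pow_const _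
  convert Finset.measurable_sup' hne fun i _ => h i using 1
  funext ω
  rw [Finset.sup'_apply]

theorem measureReal_sup'_margCDF_rpow_le (hX : IsMEVFrechet μ X) {x : Fin d → ℝ}
    (hx : ∀ i, 0 < x i) {t : ℝ} (ht : t ∈ Ioo (0 : ℝ) 1) :
    μ.real {ω | univ.sup' hne (fun i => margCDF μ X i (X i ω) ^ x i) ≤ t} = t ^ stdf μ X x := by
  have hL : 0 < -log t := neg_pos.2 (log_neg ht.1 ht.2)
  have hbox : {ω | univ.sup' hne (fun i => margCDF μ X i (X i ω) ^ x i) ≤ t}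
      = {ω | ∀ i, X i ω ≤ (-log t)⁻¹ * x i} := by
    ext ω
    simp only [mem_ofPred_eq, Finset.sup'_le_iff, Finset.mem_univ, true_implies,
      hX.margCDF_rpow_le_iff _ (hx _) ht]
  calc μ.real {ω | univ.sup' hne (fun i => margCDF μ X i (X i ω) ^ x i) ≤ t}
      = jointCDF μ X (fun i => (-log t)⁻¹ * x i) := by rw [hbox]; rfl
    _ = exp (-(stdf μ X x / (-log t)⁻¹)) := hX.jointCDF_smul (inv_pos.2 hL) hx
    _ = t ^ stdf μ X x := by
        rw [rpow_def_of_pos ht.1, div_inv_eq_mul, mul_neg, neg_neg, mul_comm]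

end Maximum

end IsMEVFrechet

/-- For a MEV distribution with unit Fréchet marginals and
`l = -log F`: `l(x₁,…,x_d) = E(F₁(X₁)^{x₁} ∨ … ∨ F_d(X_d)^{x_d}) / (1 - E(…))`,
equivalently `E(F₁(X₁)^{x₁} ∨ … ∨ F_d(X_d)^{x_d}) = l(x₁,…,x_d)/(1 + l(x₁,…,x_d))`. -/
theorem statement12 {Ω : Type*} [MeasurableSpace Ω] (μ : Measure Ω) [IsProbabilityMeasure μ]
    {d : ℕ} (hd : 0 < d) (X : Fin d → Ω → ℝ) (hX : IsMEVFrechet μ X)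
    (x : Fin d → ℝ) (hx : ∀ i, 0 < x i) :
    stdf μ X x
      = (∫ ω, Finset.univ.sup' ⟨⟨0, hd⟩, Finset.mem_univ _⟩
            (fun i => margCDF μ X i (X i ω) ^ x i) ∂μ)
        / (1 - ∫ ω, Finset.univ.sup' ⟨⟨0, hd⟩, Finset.mem_univ _⟩
            (fun i => margCDF μ X i (X i ω) ^ x i) ∂μ) ∧
    (∫ ω, Finset.univ.sup' ⟨⟨0, hd⟩, Finset.mem_univ _⟩
          (fun i => margCDF μ X i (X i ω) ^ x i) ∂μ)
      = stdf μ X x / (1 + stdf μ X x) := by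
  have hne : (univ : Finset (Fin d)).Nonempty := ⟨⟨0, hd⟩, mem_univ _⟩
  have hl : 0 < stdf μ X x := hX.stdf_pos hd hx
  have hE : ∫ ω, univ.sup' hne (fun i => margCDF μ X i (X i ω) ^ x i) ∂μ
      = stdf μ X x / (1 + stdf μ X x) :=
    integral_eq_div_one_add_of_measureReal_le_eq_rpow (hX.measurable_sup'_margCDF_rpow hne x)
      (fun ω => (le_sup'_iff hne).2
        ⟨⟨0, hd⟩, mem_univ _, rpow_nonneg measureReal_nonneg _⟩)
      (fun ω => sup'_le hne _ fun i _ =>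
        rpow_le_one measureReal_nonneg (margCDF_le_one μ X i _) (hx i).le)
      hl.le (fun t ht => hX.measureReal_sup'_margCDF_rpow_le hne hx ht)
  refine ⟨?_, hE⟩
  rw [hE]
  field_simp
  ring
end
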